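/- arXiv:2407.01969 — 13 statements merged into one kernel-verified Lean document; each statement's English description precedes it below -/
import Mathlib

section
/- If x ≥ 0 and y ≥ 0 satisfy x = βy²/(γ+y) + (1-d₀-α/(1+x))x and y = αx/(1+x) + (1-μ)y with x > 0, then x is a positive root of the quadratic d₀μ(α+γμ)x² + (μ(d₀γμ + (α+d₀)(α+γμ)) - α²β)x + γμ²(α+d₀) = 0 and y = αx/(μ(1+x)). -/
/-! The second fixed-point equation is linear in `y` and gives `μ (1 + x) y = α x`. Clearing
denominators in the first one gives `(α + d₀ (1 + x)) x (γ + y) = β (1 + x) y²`; eliminating `y`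
with the first identity turns this into `x` times the quadratic, and `x ≠ 0`. -/

section FixedPoint

variable {α β γ μ d₀ x y : ℝ}

lemma fixedPoint_snd_mul (h1x : 1 + x ≠ 0)
    (hfix2 : y = α * x / (1 + x) + (1 - μ) * y) :
    μ * (1 + x) * y = α * x := by
  field_simp at hfix2
  linear_combination hfix2

lemma fixedPoint_fst_mul (h1x : 1 + x ≠ 0) (hγy : γ + y ≠ 0)
    (hfix1 : x = β * y ^ 2 / (γ + y) + (1 - d₀ - α / (1 + x)) * x) :
    (α + d₀ * (1 + x)) * x * (γ + y) = β * (1 + x) * y ^ 2 := by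
  field_simp at hfix1
  linear_combination hfix1

lemma quadratic_eq_factored :
    d₀ * μ * (α + γ * μ) * x ^ 2
      + (μ * (d₀ * γ * μ + (α + d₀) * (α + γ * μ)) - α ^ 2 * β) * x
      + γ * μ ^ 2 * (α + d₀)
    = μ * (α + d₀ * (1 + x)) * (γ * μ * (1 + x) + α * x) - α ^ 2 * β * x := by
  ring

lemma mul_quadratic_factor_eq_zero
    (hsnd : μ * (1 + x) * y = α * x)
    (hfst : (α + d₀ * (1 + x)) * x * (γ + y) = β * (1 + x) * y ^ 2) :
    x * (μ * (α + d₀ * (1 + x)) * (γ * μ * (1 + x) + α * x) - α ^ 2 * β * x) = 0 := by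
  linear_combination μ ^ 2 * (1 + x) * hfst
    - (μ * (α + d₀ * (1 + x)) * x - β * (μ * (1 + x) * y + α * x)) * hsnd

end FixedPoint

theorem stmt_1_general (α β γ μ d₀ : ℝ)
    (hγ : 0 < γ) (hμ0 : 0 < μ)
    (x y : ℝ) (hy : 0 ≤ y)
    (hfix1 : x = β * y ^ 2 / (γ + y) + (1 - d₀ - α / (1 + x)) * x)
    (hfix2 : y = α * x / (1 + x) + (1 - μ) * y)
    (hxpos : 0 < x) :
    d₀ * μ * (α + γ * μ) * x ^ 2
      + (μ * (d₀ * γ * μ + (α + d₀) * (α + γ * μ)) - α ^ 2 * β) * x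
      + γ * μ ^ 2 * (α + d₀) = 0
    ∧ y = α * x / (μ * (1 + x)) := by
  have h1x : 0 < 1 + x := by linarith
  have hsnd := fixedPoint_snd_mul h1x.ne' hfix2
  have hfst := fixedPoint_fst_mul h1x.ne' (by linarith) hfix1
  refine ⟨?_, ?_⟩
  · rw [quadratic_eq_factored]
    exact (mul_eq_zero.mp (mul_quadratic_factor_eq_zero hsnd hfst)).resolve_left hxpos.ne'
  · rw [eq_div_iff (by positivity)]
    linear_combination hsnd

/-- A positive fixed point of `W` gives a positive root of the quadratic,
and its second coordinate is `α x / (μ (1 + x))`. -/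
theorem stmt_1 (α β γ μ d₀ : ℝ)
    (hα : 0 < α) (hβ : 0 < β) (hγ : 0 < γ) (hμ0 : 0 < μ) (hμ1 : μ ≤ 1)
    (hd₀ : 0 < d₀) (hαd : α + d₀ ≤ 1)
    (x y : ℝ) (hx : 0 ≤ x) (hy : 0 ≤ y)
    (hfix1 : x = β * y ^ 2 / (γ + y) + (1 - d₀ - α / (1 + x)) * x)
    (hfix2 : y = α * x / (1 + x) + (1 - μ) * y)
    (hxpos : 0 < x) :
    d₀ * μ * (α + γ * μ) * x ^ 2
      + (μ * (d₀ * γ * μ + (α + d₀) * (α + γ * μ)) - α ^ 2 * β) * x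
      + γ * μ ^ 2 * (α + d₀) = 0
    ∧ y = α * x / (μ * (1 + x)) :=
  stmt_1_general α β γ μ d₀ hγ hμ0 x y hy hfix1 hfix2 hxpos
end

section
/- Let ν = (μ/α²)(√(d₀γμ) + √((α+d₀)(α+γμ)))². If β < ν, then the only fixed point of W in the nonnegative quadrant is (0,0). -/
lemma key_ineq (α γ μ d₀ y : ℝ) (hα : 0 < α) (hγ : 0 < γ) (hμ0 : 0 < μ)
    (hd₀ : 0 < d₀) :
    (Real.sqrt (d₀ * γ * μ) + Real.sqrt ((α + d₀) * (α + γ * μ))) ^ 2 * (y * (α - μ * y))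
      ≤ α ^ 2 * ((γ + y) * (α + d₀ - μ * y)) := by
  set s := Real.sqrt (d₀ * γ * μ) with hsdef
  set t := Real.sqrt ((α + d₀) * (α + γ * μ)) with htdef
  have hs0 : 0 ≤ s := Real.sqrt_nonneg _
  have ht0 : 0 ≤ t := Real.sqrt_nonneg _
  have hs : s ^ 2 = d₀ * γ * μ := Real.sq_sqrt (by positivity)
  have ht : t ^ 2 = (α + d₀) * (α + γ * μ) := Real.sq_sqrt (by positivity)
  have hA : 0 < μ * ((s + t) ^ 2 - α ^ 2) := by
    have h1 : α ^ 2 < (s + t) ^ 2 := by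
      nlinarith [ht, mul_nonneg hs0 ht0, sq_nonneg s, mul_pos hα (mul_pos hγ hμ0),
        mul_pos hα hd₀, mul_pos hd₀ (mul_pos hγ hμ0)]
    nlinarith
  have hB2 : (α ^ 2 * (α + d₀ - γ * μ) - (s + t) ^ 2 * α) ^ 2 =
      4 * (μ * ((s + t) ^ 2 - α ^ 2)) * (α ^ 2 * (γ * (α + d₀))) := by
    linear_combination (-3*α^2*γ*μ*d₀ - 2*α^3*d₀ - 2*α^3*γ*μ - 2*α^4 + 6*t^2*α^2
        + 4*s*t*α^2 + s^2*α^2) * hs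
      + (3*α^2*γ*μ*d₀ - α^3*d₀ - α^3*γ*μ - α^4 + t^2*α^2 + 4*s*t*α^2) * ht
  have hQ : 0 ≤ 4 * (μ * ((s + t) ^ 2 - α ^ 2)) *
      (α ^ 2 * ((γ + y) * (α + d₀ - μ * y)) - (s + t) ^ 2 * (y * (α - μ * y))) := by
    nlinarith [sq_nonneg (2 * (μ * ((s + t) ^ 2 - α ^ 2)) * y +
      (α ^ 2 * (α + d₀ - γ * μ) - (s + t) ^ 2 * α)), hB2]
  nlinarith [hQ, hA]

/-- If `β < ν` then the only fixed point of `W` in the nonnegative quadrant is the origin. -/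
theorem stmt_2 (α β γ μ d₀ : ℝ)
    (hα : 0 < α) (hβ : 0 < β) (hγ : 0 < γ) (hμ0 : 0 < μ) (hμ1 : μ ≤ 1)
    (hd₀ : 0 < d₀) (hαd : α + d₀ ≤ 1)
    (hβν : β < μ / α ^ 2 *
      (Real.sqrt (d₀ * γ * μ) + Real.sqrt ((α + d₀) * (α + γ * μ))) ^ 2) :
    ∀ x y : ℝ, 0 ≤ x → 0 ≤ y →
      ((β * y ^ 2 / (γ + y) + (1 - d₀ - α / (1 + x)) * x = x ∧
        α * x / (1 + x) + (1 - μ) * y = y) ↔ (x = 0 ∧ y = 0)) := by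
  intro x y hx hy
  have h1x : (0:ℝ) < 1 + x := by linarith
  have hγy : (0:ℝ) < γ + y := by linarith
  set s := Real.sqrt (d₀ * γ * μ) with hsdef
  set t := Real.sqrt ((α + d₀) * (α + γ * μ)) with htdef
  constructor
  · rintro ⟨h1, h2⟩
    -- from h2 : α x = μ y (1+x)
    have h2' : α * x = μ * y * (1 + x) := by
      have hax : α * x / (1 + x) = μ * y := by linear_combination h2
      rw [div_eq_iff (ne_of_gt h1x)] at hax
      linarith
    rcases eq_or_lt_of_le hx with hx0 | hx0
    · have hx0 : x = 0 := hx0.symm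
      subst hx0
      have h0 : μ * y = 0 := by nlinarith [h2']
      refine ⟨rfl, ?_⟩
      rcases mul_eq_zero.1 h0 with h | h
      · exact absurd h (ne_of_gt hμ0)
      · exact h
    · exfalso
      have hy0 : 0 < y := by
        rcases eq_or_lt_of_le hy with h | h
        · exfalso
          subst h
          nlinarith [h2', mul_pos hα hx0]
        · exact h
      have hαμy0 : 0 < α - μ * y := by
        nlinarith [h2', hx0.le, mul_pos hα hx0]
      have hxval : x * (α - μ * y) = μ * y := by linear_combination h2'
      have hax : α * x / (1 + x) = μ * y := by
        rw [div_eq_iff (ne_of_gt h1x)]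
        linarith [h2']
      have hA1 : β * y ^ 2 / (γ + y) = d₀ * x + μ * y := by
        have hq : α / (1 + x) * x = μ * y := by
          rw [div_mul_eq_mul_div]
          exact hax
        linear_combination h1 + hq
      have h1' : β * y ^ 2 = (d₀ * x + μ * y) * (γ + y) :=
        (div_eq_iff (ne_of_gt hγy)).mp hA1
      have hk0 : y * (β * (y * (α - μ * y))) = y * (μ * ((γ + y) * (α + d₀ - μ * y))) := by
        linear_combination (α - μ * y) * h1' + d₀ * (γ + y) * hxval
      have hkey : β * (y * (α - μ * y)) = μ * ((γ + y) * (α + d₀ - μ * y)) :=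
        mul_left_cancel₀ (ne_of_gt hy0) hk0
      have hkey2 := key_ineq α γ μ d₀ y hα hγ hμ0 hd₀
      rw [← hsdef, ← htdef] at hkey2
      have hpos : 0 < y * (α - μ * y) := mul_pos hy0 hαμy0
      have hK : β * α ^ 2 < μ * (s + t) ^ 2 := by
        have hα2 : (0:ℝ) < α ^ 2 := by positivity
        have := mul_lt_mul_of_pos_right hβν hα2
        calc β * α ^ 2 < μ / α ^ 2 * (s + t) ^ 2 * α ^ 2 := this
          _ = μ * (s + t) ^ 2 := by field_simp
      have e2 := mul_le_mul_of_nonneg_left hkey2 hμ0.le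
      have e3 := mul_lt_mul_of_pos_right hK hpos
      have hfinal : μ * (s + t) ^ 2 * (y * (α - μ * y))
          ≤ β * α ^ 2 * (y * (α - μ * y)) := by
        calc μ * (s + t) ^ 2 * (y * (α - μ * y))
            = μ * ((s + t) ^ 2 * (y * (α - μ * y))) := by ring
          _ ≤ μ * (α ^ 2 * ((γ + y) * (α + d₀ - μ * y))) := e2
          _ = β * α ^ 2 * (y * (α - μ * y)) := by linear_combination α ^ 2 * hkey.symm
      linarith [hfinal, e3]
  · rintro ⟨hx0, hy0⟩
    subst hx0; subst hy0
    norm_num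
end

section
/- Let ν = (μ/α²)(√(d₀γμ) + √((α+d₀)(α+γμ)))². If β = ν, then W has exactly two fixed points in the nonnegative quadrant: (0,0) and (x₁*, y₁*), where x₁* = √(γμ(α+d₀)/(d₀(α+γμ))) and y₁* = αx₁*/(μ(1+x₁*)). -/
/-!
The second equation says `y = α x / (μ (1 + x))`. Substituting it into the first, a positive `x`
is the abscissa of a fixed point iff `β α² x = μ (d₀ (1 + x) + α) (γ μ (1 + x) + α x)`. When
`β = ν` the difference of the two sides is `-μ (u x - v)²` with `u = √(d₀ (α + γ μ))` and
`v = √(γ μ (α + d₀))`, so this quadratic has the single (double) root `x = v / u = x₁*`.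
-/

lemma W_snd_eq_self_iff {α μ x y : ℝ} (hμ : μ ≠ 0) (hx : 1 + x ≠ 0) :
    α * x / (1 + x) + (1 - μ) * y = y ↔ y = α * x / (μ * (1 + x)) := by
  rw [eq_div_iff (mul_ne_zero hμ hx), div_add' _ _ _ hx, div_eq_iff hx]
  constructor <;> intro h <;> linear_combination -h

lemma W_fst_eq_self_iff {α β γ μ d₀ x : ℝ} (hα : 0 ≤ α) (hγ : 0 < γ) (hμ : 0 < μ) (hx : 0 < x) :
    β * (α * x / (μ * (1 + x))) ^ 2 / (γ + α * x / (μ * (1 + x))) +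
        (1 - d₀ - α / (1 + x)) * x = x ↔
      β * α ^ 2 * x = μ * ((d₀ * (1 + x) + α) * (γ * μ * (1 + x) + α * x)) := by
  have hpos : 0 < γ * μ * (1 + x) + α * x := by positivity
  field_simp
  constructor <;> intro h <;> linear_combination h

lemma sqrt_add_sqrt_sq_mul_eq_iff {α p d₀ x : ℝ} (hα : 0 < α) (hp : 0 ≤ p) (hd₀ : 0 < d₀) :
    (√(d₀ * p) + √((α + d₀) * (α + p))) ^ 2 * x =
        (d₀ * (1 + x) + α) * (p * (1 + x) + α * x) ↔
      x = √(p * (α + d₀) / (d₀ * (α + p))) := by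
  set u := √(d₀ * (α + p))
  set v := √(p * (α + d₀))
  have hu : 0 < u := Real.sqrt_pos.mpr (by positivity)
  have hu2 : u ^ 2 = d₀ * (α + p) := Real.sq_sqrt (by positivity)
  have hv2 : v ^ 2 = p * (α + d₀) := Real.sq_sqrt (by positivity)
  have hs2 : √(d₀ * p) ^ 2 = d₀ * p := Real.sq_sqrt (by positivity)
  have ht2 : √((α + d₀) * (α + p)) ^ 2 = (α + d₀) * (α + p) := Real.sq_sqrt (by positivity)
  have hst : √(d₀ * p) * √((α + d₀) * (α + p)) = u * v := by
    rw [← Real.sqrt_mul (by positivity), ← Real.sqrt_mul (by positivity)]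
    ring_nf
  have hdiff : (√(d₀ * p) + √((α + d₀) * (α + p))) ^ 2 * x -
      (d₀ * (1 + x) + α) * (p * (1 + x) + α * x) = -(u * x - v) ^ 2 := by
    linear_combination x * hs2 + x * ht2 + 2 * x * hst + x ^ 2 * hu2 + hv2
  rw [Real.sqrt_div' _ (by positivity), eq_div_iff hu.ne', ← sub_eq_zero, hdiff, neg_eq_zero,
    sq_eq_zero_iff, sub_eq_zero, mul_comm]

theorem stmt_3_general (α β γ μ d₀ : ℝ)
    (hα : 0 < α) (hγ : 0 < γ) (hμ0 : 0 < μ)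
    (hd₀ : 0 < d₀)
    (hβν : β = μ / α ^ 2 *
      (Real.sqrt (d₀ * γ * μ) + Real.sqrt ((α + d₀) * (α + γ * μ))) ^ 2)
    (x₁ y₁ : ℝ)
    (hx₁ : x₁ = Real.sqrt (γ * μ * (α + d₀) / (d₀ * (α + γ * μ))))
    (hy₁ : y₁ = α * x₁ / (μ * (1 + x₁))) :
    ∀ x y : ℝ, 0 ≤ x → 0 ≤ y →
      ((β * y ^ 2 / (γ + y) + (1 - d₀ - α / (1 + x)) * x = x ∧
        α * x / (1 + x) + (1 - μ) * y = y) ↔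
        ((x = 0 ∧ y = 0) ∨ (x = x₁ ∧ y = y₁))) := by
  intro x y hx _
  have hx₁pos : 0 < x₁ := by rw [hx₁]; positivity
  rw [W_snd_eq_self_iff hμ0.ne' (by positivity)]
  rcases hx.eq_or_lt with rfl | hxpos
  · constructor
    · rintro ⟨-, rfl⟩
      simp
    · rintro (⟨-, rfl⟩ | ⟨h, -⟩)
      · simp
      · exact absurd h hx₁pos.ne
  have hβα : β * α ^ 2 = μ * (√(d₀ * (γ * μ)) + √((α + d₀) * (α + γ * μ))) ^ 2 := by
    rw [hβν, mul_assoc d₀]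
    field_simp
  have hfixed_x : β * (α * x / (μ * (1 + x))) ^ 2 / (γ + α * x / (μ * (1 + x))) +
      (1 - d₀ - α / (1 + x)) * x = x ↔ x = x₁ := by
    rw [W_fst_eq_self_iff hα.le hγ hμ0 hxpos, hβα, mul_assoc, mul_right_inj' hμ0.ne',
      sqrt_add_sqrt_sq_mul_eq_iff hα (mul_nonneg hγ.le hμ0.le) hd₀, hx₁]
  constructor
  · rintro ⟨h, rfl⟩
    exact Or.inr ⟨hfixed_x.mp h, by rw [hy₁, hfixed_x.mp h]⟩
  · rintro (⟨rfl, -⟩ | ⟨rfl, rfl⟩)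
    · exact absurd hxpos (lt_irrefl 0)
    · rw [hy₁]
      exact ⟨hfixed_x.mpr rfl, rfl⟩

/-- If `β = ν` then `W` has exactly two fixed points in the nonnegative quadrant. -/
theorem stmt_3 (α β γ μ d₀ : ℝ)
    (hα : 0 < α) (hβ : 0 < β) (hγ : 0 < γ) (hμ0 : 0 < μ) (hμ1 : μ ≤ 1)
    (hd₀ : 0 < d₀) (hαd : α + d₀ ≤ 1)
    (hβν : β = μ / α ^ 2 *
      (Real.sqrt (d₀ * γ * μ) + Real.sqrt ((α + d₀) * (α + γ * μ))) ^ 2)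
    (x₁ y₁ : ℝ)
    (hx₁ : x₁ = Real.sqrt (γ * μ * (α + d₀) / (d₀ * (α + γ * μ))))
    (hy₁ : y₁ = α * x₁ / (μ * (1 + x₁))) :
    ∀ x y : ℝ, 0 ≤ x → 0 ≤ y →
      ((β * y ^ 2 / (γ + y) + (1 - d₀ - α / (1 + x)) * x = x ∧
        α * x / (1 + x) + (1 - μ) * y = y) ↔
        ((x = 0 ∧ y = 0) ∨ (x = x₁ ∧ y = y₁))) :=
  stmt_3_general α β γ μ d₀ hα hγ hμ0 hd₀ hβν x₁ y₁ hx₁ hy₁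
end

section
/- Let ν = (μ/α²)(√(d₀γμ) + √((α+d₀)(α+γμ)))² and D = (μ(d₀γμ + (α+d₀)(α+γμ)) - α²β)² - 4d₀γμ³(α+d₀)(α+γμ). If β > ν, then D > 0 and W has exactly three fixed points in the nonnegative quadrant: (0,0), (x₂*, y₂*), and (x₃*, y₃*), where x₂* and x₃* are the two distinct positive roots (x₂* < x₃*) of d₀μ(α+γμ)x² + (μ(d₀γμ+(α+d₀)(α+γμ)) - α²β)x + γμ²(α+d₀) = 0 and yᵢ* = αxᵢ*/(μ(1+xᵢ*)). -/
private lemma key_ident (α β γ μ d₀ x : ℝ) (hα : 0 < α) (hγ : 0 < γ) (hμ : 0 < μ)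
    (hx : 0 < x) :
    (β * (α*x/(μ*(1+x)))^2 / (γ + α*x/(μ*(1+x))) + (1-d₀-α/(1+x))*x - x)
      * (μ*(1+x)*(γ*μ*(1+x)+α*x))
    = -(x * (d₀*μ*(α+γ*μ)*x^2
        + (μ*(d₀*γ*μ+(α+d₀)*(α+γ*μ)) - α^2*β)*x + γ*μ^2*(α+d₀))) := by
  have hx1 : (0:ℝ) < 1 + x := by linarith
  have hden : (0:ℝ) < γ + α*x/(μ*(1+x)) := by positivity
  field_simp
  ring

private lemma eq1_iff (α β γ μ d₀ x : ℝ) (hα : 0 < α) (hγ : 0 < γ) (hμ : 0 < μ)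
    (hx : 0 < x) :
    (β * (α*x/(μ*(1+x)))^2 / (γ + α*x/(μ*(1+x))) + (1-d₀-α/(1+x))*x = x) ↔
    (d₀*μ*(α+γ*μ)*x^2
        + (μ*(d₀*γ*μ+(α+d₀)*(α+γ*μ)) - α^2*β)*x + γ*μ^2*(α+d₀) = 0) := by
  have hx1 : (0:ℝ) < 1 + x := by linarith
  have hM : (0:ℝ) < μ*(1+x)*(γ*μ*(1+x)+α*x) := by positivity
  have hk := key_ident α β γ μ d₀ x hα hγ hμ hx
  constructor
  · intro h
    rw [h, sub_self, zero_mul] at hk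
    have := hk.symm
    rw [neg_eq_zero, mul_eq_zero] at this
    rcases this with h' | h'
    · exact absurd h' hx.ne'
    · exact h'
  · intro h
    rw [h, mul_zero, neg_zero, mul_eq_zero] at hk
    rcases hk with h' | h'
    · linarith [sub_eq_zero.mp h']
    · exact absurd h' hM.ne'

private lemma eq2_holds (α μ x : ℝ) (hμ : 0 < μ) (hx : 0 < x) :
    α * x / (1 + x) + (1 - μ) * (α * x / (μ * (1 + x))) = α * x / (μ * (1 + x)) := by
  have hx1 : (0:ℝ) < 1 + x := by linarith
  field_simp
  ring

/-- If `β > ν` then `D > 0` and `W` has exactly three fixed points in the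
nonnegative quadrant: the origin and two positive ones coming from the two
distinct positive roots of the quadratic. -/
theorem stmt_4 (α β γ μ d₀ : ℝ)
    (hα : 0 < α) (hβ : 0 < β) (hγ : 0 < γ) (hμ0 : 0 < μ) (hμ1 : μ ≤ 1)
    (hd₀ : 0 < d₀) (hαd : α + d₀ ≤ 1)
    (hβν : β > μ / α ^ 2 *
      (Real.sqrt (d₀ * γ * μ) + Real.sqrt ((α + d₀) * (α + γ * μ))) ^ 2) :
    (μ * (d₀ * γ * μ + (α + d₀) * (α + γ * μ)) - α ^ 2 * β) ^ 2
      - 4 * d₀ * γ * μ ^ 3 * (α + d₀) * (α + γ * μ) > 0 ∧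
    ∃ x₂ x₃ : ℝ, 0 < x₂ ∧ x₂ < x₃ ∧
      (d₀ * μ * (α + γ * μ) * x₂ ^ 2
        + (μ * (d₀ * γ * μ + (α + d₀) * (α + γ * μ)) - α ^ 2 * β) * x₂
        + γ * μ ^ 2 * (α + d₀) = 0) ∧
      (d₀ * μ * (α + γ * μ) * x₃ ^ 2
        + (μ * (d₀ * γ * μ + (α + d₀) * (α + γ * μ)) - α ^ 2 * β) * x₃
        + γ * μ ^ 2 * (α + d₀) = 0) ∧
      (∀ x y : ℝ, 0 ≤ x → 0 ≤ y →
        ((β * y ^ 2 / (γ + y) + (1 - d₀ - α / (1 + x)) * x = x ∧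
          α * x / (1 + x) + (1 - μ) * y = y) ↔
          ((x = 0 ∧ y = 0) ∨
           (x = x₂ ∧ y = α * x₂ / (μ * (1 + x₂))) ∨
           (x = x₃ ∧ y = α * x₃ / (μ * (1 + x₃)))))) := by
  set s1 := Real.sqrt (d₀ * γ * μ) with hs1def
  set s2 := Real.sqrt ((α + d₀) * (α + γ * μ)) with hs2def
  have hs1 : s1 ^ 2 = d₀ * γ * μ := Real.sq_sqrt (by positivity)
  have hs2 : s2 ^ 2 = (α + d₀) * (α + γ * μ) := Real.sq_sqrt (by positivity)
  have hs1n : 0 ≤ s1 := Real.sqrt_nonneg _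
  have hs2n : 0 ≤ s2 := Real.sqrt_nonneg _
  have h1 : μ * (s1 + s2) ^ 2 < α ^ 2 * β := by
    have h := mul_lt_mul_of_pos_right hβν (show (0:ℝ) < α^2 by positivity)
    calc μ * (s1 + s2) ^ 2 = μ / α ^ 2 * (s1 + s2) ^ 2 * α ^ 2 := by
          field_simp
      _ < β * α ^ 2 := h
      _ = α ^ 2 * β := by ring
  set A := d₀ * μ * (α + γ * μ) with hAdef
  set B := μ * (d₀ * γ * μ + (α + d₀) * (α + γ * μ)) - α ^ 2 * β with hBdef
  set C := γ * μ ^ 2 * (α + d₀) with hCdef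
  have hA : 0 < A := by rw [hAdef]; positivity
  have hC : 0 < C := by rw [hCdef]; positivity
  have hB1 : B + 2 * μ * (s1 * s2) < 0 := by rw [hBdef]; nlinarith
  have hB2 : B - 2 * μ * (s1 * s2) < 0 := by
    rw [hBdef]; nlinarith [mul_nonneg hs1n hs2n]
  have hprod : s1 ^ 2 * s2 ^ 2 = (d₀ * γ * μ) * ((α + d₀) * (α + γ * μ)) := by
    rw [hs1, hs2]
  have hAC : 4 * μ ^ 2 * (s1 * s2) ^ 2 = 4 * A * C := by
    rw [hAdef, hCdef]; linear_combination (4 * μ ^ 2) * hprod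
  have hD : 0 < B ^ 2 - 4 * A * C := by
    nlinarith [mul_pos (neg_pos.2 hB1) (neg_pos.2 hB2), hAC]
  have hDgoal : B ^ 2 - 4 * d₀ * γ * μ ^ 3 * (α + d₀) * (α + γ * μ) > 0 := by
    have : 4 * A * C = 4 * d₀ * γ * μ ^ 3 * (α + d₀) * (α + γ * μ) := by
      rw [hAdef, hCdef]; ring
    linarith
  refine ⟨hDgoal, ?_⟩
  set sd := Real.sqrt (B ^ 2 - 4 * A * C) with hsddef
  have hsd2 : sd ^ 2 = B ^ 2 - 4 * A * C := Real.sq_sqrt hD.le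
  have hsdpos : 0 < sd := Real.sqrt_pos.2 hD
  have hBneg : B < 0 := by
    have : 0 ≤ 2 * μ * (s1 * s2) := by positivity
    linarith
  have hsdltB : sd < -B := by
    have h4 : 0 < 4 * A * C := by positivity
    have : sd < Real.sqrt (B ^ 2) := Real.sqrt_lt_sqrt hD.le (by linarith)
    rwa [Real.sqrt_sq_eq_abs, abs_of_neg hBneg] at this
  have hroot : ∀ t : ℝ, t = sd ∨ t = -sd →
      A * ((-B + t) / (2*A)) ^ 2 + B * ((-B + t) / (2*A)) + C = 0 := by
    intro t ht
    have ht2 : t ^ 2 = B ^ 2 - 4 * A * C := by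
      rcases ht with rfl | rfl
      · exact hsd2
      · rw [neg_pow]; simpa using hsd2
    have heq : A * ((-B + t) / (2*A)) ^ 2 + B * ((-B + t) / (2*A)) + C
        = (t ^ 2 - (B ^ 2 - 4 * A * C)) / (4 * A) := by
      field_simp
      ring
    rw [heq, ht2, sub_self, zero_div]
  set xa := (-B - sd) / (2*A) with hxadef
  set xb := (-B + sd) / (2*A) with hxbdef
  have h2A : (0:ℝ) < 2*A := by positivity
  have hxa : 0 < xa := by
    rw [hxadef]
    exact div_pos (by linarith) h2A
  have hxb : xa < xb := by
    rw [hxadef, hxbdef]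
    exact (div_lt_div_iff_of_pos_right h2A).2 (by linarith)
  have hqa : A * xa ^ 2 + B * xa + C = 0 := by
    rw [hxadef, sub_eq_add_neg]
    exact hroot (-sd) (Or.inr rfl)
  have hqb : A * xb ^ 2 + B * xb + C = 0 := hroot sd (Or.inl rfl)
  have hcase : ∀ z : ℝ, A * z ^ 2 + B * z + C = 0 → z = xa ∨ z = xb := by
    intro z hz
    by_contra hne
    push_neg at hne
    obtain ⟨hne1, hne2⟩ := hne
    have e1 : (z - xa) * (A * (z + xa) + B) = 0 := by linear_combination hz - hqa
    have e2 : (z - xb) * (A * (z + xb) + B) = 0 := by linear_combination hz - hqb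
    have f1 : A * (z + xa) + B = 0 := by
      rcases mul_eq_zero.mp e1 with h | h
      · exact absurd (sub_eq_zero.mp h) hne1
      · exact h
    have f2 : A * (z + xb) + B = 0 := by
      rcases mul_eq_zero.mp e2 with h | h
      · exact absurd (sub_eq_zero.mp h) hne2
      · exact h
    have f3 : A * (xa - xb) = 0 := by linear_combination f1 - f2
    rcases mul_eq_zero.mp f3 with h | h
    · exact hA.ne' h
    · have : xa = xb := by linarith [sub_eq_zero.mp h]
      exact absurd this hxb.ne
  refine ⟨xa, xb, hxa, hxb, hqa, hqb, ?_⟩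
  have hqa' : d₀ * μ * (α + γ * μ) * xa ^ 2
      + (μ * (d₀ * γ * μ + (α + d₀) * (α + γ * μ)) - α ^ 2 * β) * xa
      + γ * μ ^ 2 * (α + d₀) = 0 := by
    rw [hAdef, hBdef, hCdef] at hqa; exact hqa
  have hqb' : d₀ * μ * (α + γ * μ) * xb ^ 2
      + (μ * (d₀ * γ * μ + (α + d₀) * (α + γ * μ)) - α ^ 2 * β) * xb
      + γ * μ ^ 2 * (α + d₀) = 0 := by
    rw [hAdef, hBdef, hCdef] at hqb; exact hqb
  have hcase' : ∀ z : ℝ, d₀ * μ * (α + γ * μ) * z ^ 2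
      + (μ * (d₀ * γ * μ + (α + d₀) * (α + γ * μ)) - α ^ 2 * β) * z
      + γ * μ ^ 2 * (α + d₀) = 0 → z = xa ∨ z = xb := by
    intro z hz
    refine hcase z ?_
    rw [hAdef, hBdef, hCdef]; exact hz
  clear hqa hqb hcase hroot hsd2 hsdpos hBneg hsdltB hD hAC hprod hB1 hB2 hA hC
    h1 hs1 hs2 hs1n hs2n hβν hxadef hxbdef hsddef
  clear_value xa xb sd s1 s2 A B C
  have hxb0 : 0 < xb := hxa.trans hxb
  intro x y hx hy
  have hx1 : (0:ℝ) < 1 + x := by linarith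
  constructor
  · rintro ⟨h1, h2⟩
    rcases eq_or_lt_of_le hx with h0 | hxpos
    · have hx0 : x = 0 := h0.symm
      subst hx0
      left
      refine ⟨rfl, ?_⟩
      have hz : α * 0 / (1 + 0) = 0 := by norm_num
      rw [hz] at h2
      have hμy : μ * y = 0 := by linear_combination -h2
      exact (mul_eq_zero.mp hμy).resolve_left hμ0.ne'
    · right
      have hax : α * x / (1 + x) = μ * y := by linarith
      rw [div_eq_iff hx1.ne'] at hax
      have hyeq : y = α * x / (μ * (1 + x)) := by
        rw [eq_div_iff (by positivity)]
        linear_combination -hax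
      subst hyeq
      have hq := (eq1_iff α β γ μ d₀ x hα hγ hμ0 hxpos).mp h1
      rcases hcase' x hq with rfl | rfl
      · exact Or.inl ⟨rfl, rfl⟩
      · exact Or.inr ⟨rfl, rfl⟩
  · rintro (⟨hx0, hy0⟩ | ⟨hx0, hy0⟩ | ⟨hx0, hy0⟩) <;> rw [hx0, hy0]
    · norm_num
    · exact ⟨(eq1_iff α β γ μ d₀ xa hα hγ hμ0 hxa).mpr hqa',
        eq2_holds α μ xa hμ0 hxa⟩
    · exact ⟨(eq1_iff α β γ μ d₀ xb hα hγ hμ0 hxb0).mpr hqb',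
        eq2_holds α μ xb hμ0 hxb0⟩
end

section
/- At the fixed point (x₁*, y₁*) with x₁* = √(γμ(α+d₀)/(d₀(α+γμ))), y₁* = αx₁*/(μ(1+x₁*)), and β = ν = (μ/α²)(√(d₀γμ)+√((α+d₀)(α+γμ)))², the characteristic polynomial F(λ) = λ² + Bλ + C of the Jacobian of W satisfies F(1) = 0, where B = μ + d₀ + α/(1+x₁*)² - 2 and C = 1 - μ - d₀ - α/(1+x₁*)² + μd₀ + (α/(1+x₁*)²)(μ - βy₁*(2γ+y₁*)/(γ+y₁*)²). Hence λ = 1 is an eigenvalue of the Jacobian at (x₁*, y₁*). -/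
/-!
Write `D = γμ(1 + x₁) + αx₁`. The defining relation `d₀(α + γμ)x₁² = γμ(α + d₀)` gives
`√((α + d₀)(α + γμ)) = √(d₀γμ) · (α + γμ)x₁/(γμ)`, so the two square roots in `β` combine and
`β = d₀D²/(α²γ)`. On the other hand `F(1) = μd₀ + (α/(1 + x₁)²)(μ - βJ)` with
`J = y₁(2γ + y₁)/(γ + y₁)² = 1 - (γμ(1 + x₁)/D)²`, and after clearing denominators `F(1) = 0`
is again the defining relation of `x₁`.
-/

section SaddleNode

variable {α γ μ d₀ x : ℝ}

lemma mul_sq_eq_of_eq_sqrt (hα : 0 < α) (hγ : 0 < γ) (hμ : 0 < μ) (hd₀ : 0 < d₀)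
    (hx : x = Real.sqrt (γ * μ * (α + d₀) / (d₀ * (α + γ * μ)))) :
    d₀ * (α + γ * μ) * x ^ 2 = γ * μ * (α + d₀) := by
  rw [hx, Real.sq_sqrt (by positivity)]
  field_simp

lemma sqrt_mul_eq_of_mul_sq_eq (hα : 0 < α) (hγ : 0 < γ) (hμ : 0 < μ) (hd₀ : 0 < d₀)
    (hx : 0 ≤ x) (hquad : d₀ * (α + γ * μ) * x ^ 2 = γ * μ * (α + d₀)) :
    Real.sqrt ((α + d₀) * (α + γ * μ)) =
      Real.sqrt (d₀ * γ * μ) * ((α + γ * μ) * x / (γ * μ)) := by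
  rw [← Real.sqrt_sq (x := (α + γ * μ) * x / (γ * μ)) (by positivity),
    ← Real.sqrt_mul (by positivity)]
  congr 1
  field_simp
  linear_combination -hquad

lemma div_sq_mul_sqrt_add_sqrt_sq_eq (hα : 0 < α) (hγ : 0 < γ) (hμ : 0 < μ) (hd₀ : 0 < d₀)
    (hx : 0 ≤ x) (hquad : d₀ * (α + γ * μ) * x ^ 2 = γ * μ * (α + d₀)) :
    μ / α ^ 2 * (Real.sqrt (d₀ * γ * μ) + Real.sqrt ((α + d₀) * (α + γ * μ))) ^ 2 =
      d₀ * (γ * μ * (1 + x) + α * x) ^ 2 / (α ^ 2 * γ) := by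
  rw [sqrt_mul_eq_of_mul_sq_eq hα hγ hμ hd₀ hx hquad, ← mul_one_add, mul_pow,
    Real.sq_sqrt (by positivity)]
  field_simp
  ring

end SaddleNode

theorem stmt_10_general (α β γ μ d₀ : ℝ)
    (hα : 0 < α) (hγ : 0 < γ) (hμ0 : 0 < μ)
    (hd₀ : 0 < d₀)
    (hβν : β = μ / α ^ 2 *
      (Real.sqrt (d₀ * γ * μ) + Real.sqrt ((α + d₀) * (α + γ * μ))) ^ 2)
    (x₁ y₁ B C : ℝ)
    (hx₁ : x₁ = Real.sqrt (γ * μ * (α + d₀) / (d₀ * (α + γ * μ))))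
    (hy₁ : y₁ = α * x₁ / (μ * (1 + x₁)))
    (hB : B = μ + d₀ + α / (1 + x₁) ^ 2 - 2)
    (hC : C = 1 - μ - d₀ - α / (1 + x₁) ^ 2 + μ * d₀ +
      α / (1 + x₁) ^ 2 * (μ - β * y₁ * (2 * γ + y₁) / (γ + y₁) ^ 2)) :
    (1 : ℝ) ^ 2 + B * 1 + C = 0 := by
  have hx₁0 : 0 ≤ x₁ := hx₁ ▸ Real.sqrt_nonneg _
  have hquad := mul_sq_eq_of_eq_sqrt hα hγ hμ0 hd₀ hx₁
  rw [div_sq_mul_sqrt_add_sqrt_sq_eq hα hγ hμ0 hd₀ hx₁0 hquad] at hβν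
  subst hβν hy₁ hB hC
  field_simp
  linear_combination -hquad

/-- At the fixed point `(x₁*, y₁*)` with `β = ν`, the characteristic polynomial
`F(λ) = λ² + Bλ + C` of the Jacobian of `W` satisfies `F(1) = 0`, i.e. `1` is an
eigenvalue. -/
theorem stmt_10 (α β γ μ d₀ : ℝ)
    (hα : 0 < α) (hβ : 0 < β) (hγ : 0 < γ) (hμ0 : 0 < μ) (hμ1 : μ ≤ 1)
    (hd₀ : 0 < d₀) (hαd : α + d₀ ≤ 1)
    (hβν : β = μ / α ^ 2 *
      (Real.sqrt (d₀ * γ * μ) + Real.sqrt ((α + d₀) * (α + γ * μ))) ^ 2)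
    (x₁ y₁ B C : ℝ)
    (hx₁ : x₁ = Real.sqrt (γ * μ * (α + d₀) / (d₀ * (α + γ * μ))))
    (hy₁ : y₁ = α * x₁ / (μ * (1 + x₁)))
    (hB : B = μ + d₀ + α / (1 + x₁) ^ 2 - 2)
    (hC : C = 1 - μ - d₀ - α / (1 + x₁) ^ 2 + μ * d₀ +
      α / (1 + x₁) ^ 2 * (μ - β * y₁ * (2 * γ + y₁) / (γ + y₁) ^ 2)) :
    (1 : ℝ) ^ 2 + B * 1 + C = 0 :=
  stmt_10_general α β γ μ d₀ hα hγ hμ0 hd₀ hβν x₁ y₁ B C hx₁ hy₁ hB hC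
end

section
/- The map W with parameters satisfying α>0, β>0, γ>0, 0<μ≤1, d₀>0, α+d₀≤1 is cooperative (monotone with respect to the coordinatewise order) on the nonnegative quadrant: if 0 ≤ x₁ ≤ x₂ and 0 ≤ y₁ ≤ y₂, then W(x₁,y₁) ≤ W(x₂,y₂) coordinatewise. -/
/-- The map `W` is cooperative (monotone for the coordinatewise order) on the
nonnegative quadrant. -/
theorem stmt_11 (α β γ μ d₀ : ℝ)
    (hα : 0 < α) (hβ : 0 < β) (hγ : 0 < γ) (hμ0 : 0 < μ) (hμ1 : μ ≤ 1)
    (hd₀ : 0 < d₀) (hαd : α + d₀ ≤ 1)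
    (W : ℝ × ℝ → ℝ × ℝ)
    (hW : ∀ x y : ℝ, W (x, y) =
      (β * y ^ 2 / (γ + y) + (1 - d₀ - α / (1 + x)) * x,
       α * x / (1 + x) + (1 - μ) * y)) :
    ∀ x₁ y₁ x₂ y₂ : ℝ, 0 ≤ x₁ → 0 ≤ y₁ → x₁ ≤ x₂ → y₁ ≤ y₂ →
      (W (x₁, y₁)).1 ≤ (W (x₂, y₂)).1 ∧ (W (x₁, y₁)).2 ≤ (W (x₂, y₂)).2 := by
  intro x₁ y₁ x₂ y₂ hx₁ hy₁ hx hy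
  have hx₂ : 0 ≤ x₂ := hx₁.trans hx
  have hy₂ : 0 ≤ y₂ := hy₁.trans hy
  have h1x₁ : (0:ℝ) < 1 + x₁ := by linarith
  have h1x₂ : (0:ℝ) < 1 + x₂ := by linarith
  have hγ1 : (0:ℝ) < γ + y₁ := by linarith
  have hγ2 : (0:ℝ) < γ + y₂ := by linarith
  rw [hW, hW]
  constructor
  · have hA : β * y₁ ^ 2 / (γ + y₁) ≤ β * y₂ ^ 2 / (γ + y₂) := by
      rw [div_le_div_iff₀ hγ1 hγ2]
      nlinarith [mul_nonneg (mul_nonneg hβ.le hγ.le) (mul_nonneg (add_nonneg hy₁ hy₂) (sub_nonneg.2 hy)),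
        mul_nonneg (mul_nonneg hβ.le (mul_nonneg hy₁ hy₂)) (sub_nonneg.2 hy)]
    have hB : (1 - d₀ - α / (1 + x₁)) * x₁ ≤ (1 - d₀ - α / (1 + x₂)) * x₂ := by
      have e1 : (1 - d₀ - α / (1 + x₁)) * x₁ = ((1 - d₀) * (1 + x₁) - α) * x₁ / (1 + x₁) := by
        field_simp
      have e2 : (1 - d₀ - α / (1 + x₂)) * x₂ = ((1 - d₀) * (1 + x₂) - α) * x₂ / (1 + x₂) := by
        field_simp
      rw [e1, e2, div_le_div_iff₀ h1x₁ h1x₂]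
      have hc : α ≤ (1 - d₀) * ((1 + x₁) * (1 + x₂)) := by
        have h0 : (0:ℝ) ≤ 1 - d₀ := by linarith
        nlinarith [mul_nonneg h0 (mul_nonneg hx₁ hx₂), mul_nonneg h0 hx₁, mul_nonneg h0 hx₂]
      nlinarith [mul_nonneg (sub_nonneg.2 hx) (sub_nonneg.2 hc)]
    simpa using add_le_add hA hB
  · have hC : α * x₁ / (1 + x₁) ≤ α * x₂ / (1 + x₂) := by
      rw [div_le_div_iff₀ h1x₁ h1x₂]
      nlinarith [mul_nonneg hα.le (sub_nonneg.2 hx)]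
    have hD : (1 - μ) * y₁ ≤ (1 - μ) * y₂ :=
      mul_le_mul_of_nonneg_left hy (by linarith)
    simpa using add_le_add hC hD
end

section
/- Let ω₁ = α²β/(μd₀(α+γμ)) and ω₂ = α/μ, and let Ω = [0,ω₁]×[0,ω₂]. Under conditions α>0, β>0, γ>0, 0<μ≤1, d₀>0, α+d₀≤1, and assuming β ≥ ν so that fixed points exist in Ω, the map W maps Ω into itself. -/
/-- With `ω₁ = α²β/(μd₀(α+γμ))`, `ω₂ = α/μ` and `β ≥ ν`, the map `W` maps
`Ω = [0,ω₁] × [0,ω₂]` into itself. -/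
theorem stmt_12 (α β γ μ d₀ : ℝ)
    (hα : 0 < α) (hβ : 0 < β) (hγ : 0 < γ) (hμ0 : 0 < μ) (hμ1 : μ ≤ 1)
    (hd₀ : 0 < d₀) (hαd : α + d₀ ≤ 1)
    (hβν : β ≥ μ / α ^ 2 *
      (Real.sqrt (d₀ * γ * μ) + Real.sqrt ((α + d₀) * (α + γ * μ))) ^ 2)
    (ω₁ ω₂ : ℝ)
    (hω₁ : ω₁ = α ^ 2 * β / (μ * d₀ * (α + γ * μ)))
    (hω₂ : ω₂ = α / μ)
    (W : ℝ × ℝ → ℝ × ℝ)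
    (hW : ∀ x y : ℝ, W (x, y) =
      (β * y ^ 2 / (γ + y) + (1 - d₀ - α / (1 + x)) * x,
       α * x / (1 + x) + (1 - μ) * y)) :
    Set.MapsTo W (Set.Icc 0 ω₁ ×ˢ Set.Icc 0 ω₂) (Set.Icc 0 ω₁ ×ˢ Set.Icc 0 ω₂) := by
  rintro ⟨x, y⟩ ⟨⟨hx0, hx1⟩, hy0, hy1⟩
  rw [hW]
  clear hβν
  dsimp only at hx0 hx1 hy0 hy1
  have hx1' : (0:ℝ) < 1 + x := by linarith
  have hgy : (0:ℝ) < γ + y := by linarith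
  have hω₂pos : 0 < ω₂ := by rw [hω₂]; positivity
  have hgω : (0:ℝ) < γ + ω₂ := by linarith
  have hfrac : α / (1 + x) ≤ α := by
    rw [div_le_iff₀ hx1']; nlinarith
  have hfrac0 : 0 ≤ α / (1 + x) := by positivity
  have hcoef : 0 ≤ 1 - d₀ - α / (1 + x) := by linarith
  have hterm1 : β * y ^ 2 / (γ + y) ≤ β * ω₂ ^ 2 / (γ + ω₂) := by
    rw [div_le_div_iff₀ hgy hgω]
    nlinarith [mul_nonneg (mul_nonneg hβ.le hy0) (sub_nonneg.2 hy1), mul_nonneg (mul_nonneg hβ.le hγ.le) (mul_nonneg (sub_nonneg.2 hy1) (add_nonneg hy0 hω₂pos.le))]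
  have hω₁pos : 0 < ω₁ := by rw [hω₁]; positivity
  have hkey : β * ω₂ ^ 2 / (γ + ω₂) = d₀ * ω₁ := by
    rw [hω₁, hω₂]
    have h1 : γ + α / μ = (α + γ * μ) / μ := by field_simp; ring
    rw [h1]
    have h2 : (0:ℝ) < α + γ * μ := by positivity
    field_simp
  have hαeq : α = μ * ω₂ := by rw [hω₂]; field_simp
  refine ⟨⟨?_, ?_⟩, ?_, ?_⟩
  · have h1 : 0 ≤ β * y ^ 2 / (γ + y) := by positivity
    have h2 : 0 ≤ (1 - d₀ - α / (1 + x)) * x := mul_nonneg hcoef hx0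
    linarith
  · have h2 : (1 - d₀ - α / (1 + x)) * x ≤ (1 - d₀) * x :=
      mul_le_mul_of_nonneg_right (by linarith) hx0
    have h4 : (1 - d₀) * x ≤ (1 - d₀) * ω₁ :=
      mul_le_mul_of_nonneg_left hx1 (by linarith)
    linarith
  · have h1 : 0 ≤ α * x / (1 + x) := by positivity
    have h2 : 0 ≤ (1 - μ) * y := mul_nonneg (by linarith) hy0
    linarith
  · have h3 : α * x / (1 + x) ≤ α := by
      rw [div_le_iff₀ hx1']; nlinarith
    have h4 : (1 - μ) * y ≤ (1 - μ) * ω₂ :=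
      mul_le_mul_of_nonneg_left hy1 (by linarith)
    linarith
end

section
/- Let (x⁽ⁿ⁾, y⁽ⁿ⁾) = Wⁿ(x⁽⁰⁾, y⁽⁰⁾) with (x⁽⁰⁾, y⁽⁰⁾) in the nonnegative quadrant and parameters satisfying α>0, β>0, γ>0, 0<μ≤1, d₀>0, α+d₀≤1. Then for all n ≥ 1, y⁽ⁿ⁾ < ω₂ + (1-μ)ⁿ(y⁽⁰⁾ - ω₂) where ω₂ = α/μ; in particular limsup_{n→∞} y⁽ⁿ⁾ ≤ α/μ. -/
open Filter

/-- Along trajectories of `W` from the nonnegative quadrant, for all `n ≥ 1`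
one has `y⁽ⁿ⁾ < ω₂ + (1-μ)ⁿ (y⁽⁰⁾ - ω₂)` with `ω₂ = α/μ`; in particular
`limsup yⁿ ≤ α/μ`. -/
theorem stmt_13 (α β γ μ d₀ : ℝ)
    (hα : 0 < α) (hβ : 0 < β) (hγ : 0 < γ) (hμ0 : 0 < μ) (hμ1 : μ ≤ 1)
    (hd₀ : 0 < d₀) (hαd : α + d₀ ≤ 1)
    (W : ℝ × ℝ → ℝ × ℝ)
    (hW : ∀ x y : ℝ, W (x, y) =
      (β * y ^ 2 / (γ + y) + (1 - d₀ - α / (1 + x)) * x,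
       α * x / (1 + x) + (1 - μ) * y))
    (x₀ y₀ : ℝ) (hx₀ : 0 ≤ x₀) (hy₀ : 0 ≤ y₀) :
    (∀ n : ℕ, 1 ≤ n →
      (W^[n] (x₀, y₀)).2 < α / μ + (1 - μ) ^ n * (y₀ - α / μ)) ∧
    limsup (fun n : ℕ => (W^[n] (x₀, y₀)).2) atTop ≤ α / μ := by
  have hμ' : 0 ≤ 1 - μ := by linarith
  -- invariance of the nonnegative quadrant
  have hquad : ∀ n : ℕ, 0 ≤ (W^[n] (x₀, y₀)).1 ∧ 0 ≤ (W^[n] (x₀, y₀)).2 := by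
    intro n
    induction n with
    | zero => exact ⟨hx₀, hy₀⟩
    | succ n ih =>
      obtain ⟨hx, hy⟩ := ih
      rw [Function.iterate_succ_apply']
      set p := W^[n] (x₀, y₀)
      rw [show p = (p.1, p.2) from rfl, hW p.1 p.2]
      have h1x : (0:ℝ) < 1 + p.1 := by linarith
      constructor
      · have h1 : 0 ≤ β * p.2 ^ 2 / (γ + p.2) := by positivity
        have h2 : α / (1 + p.1) ≤ α := by
          rw [div_le_iff₀ h1x]; nlinarith
        have : 0 ≤ (1 - d₀ - α / (1 + p.1)) * p.1 := by
          apply mul_nonneg _ hx; linarith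
        simpa using add_nonneg h1 this
      · have : 0 ≤ α * p.1 / (1 + p.1) := by positivity
        have : 0 ≤ (1 - μ) * p.2 := mul_nonneg hμ' hy
        simp only
        positivity
  -- key step inequality
  have hstep : ∀ n : ℕ, (W^[n+1] (x₀, y₀)).2 < α + (1 - μ) * (W^[n] (x₀, y₀)).2 := by
    intro n
    obtain ⟨hx, hy⟩ := hquad n
    rw [Function.iterate_succ_apply']
    set p := W^[n] (x₀, y₀)
    rw [show p = (p.1, p.2) from rfl, hW p.1 p.2]
    have h1x : (0:ℝ) < 1 + p.1 := by linarith
    have : α * p.1 / (1 + p.1) < α := by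
      rw [div_lt_iff₀ h1x]; nlinarith
    simp only
    linarith
  have key : ∀ n : ℕ, 1 ≤ n →
      (W^[n] (x₀, y₀)).2 < α / μ + (1 - μ) ^ n * (y₀ - α / μ) := by
    intro n hn
    induction n with
    | zero => omega
    | succ n ih =>
      have hαμ : α + (1 - μ) * (α / μ) = α / μ := by field_simp; ring
      rcases Nat.eq_or_lt_of_le hn with h | h
      · have h0 : n = 0 := by omega
        subst h0
        have := hstep 0
        simp only [Function.iterate_zero_apply] at this
        calc (W^[1] (x₀, y₀)).2 < α + (1 - μ) * y₀ := this
          _ = α / μ + (1 - μ) ^ 1 * (y₀ - α / μ) := by rw [pow_one]; linarith [hαμ]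
      · have hn' : 1 ≤ n := by omega
        have ih' := ih hn'
        calc (W^[n+1] (x₀, y₀)).2 < α + (1 - μ) * (W^[n] (x₀, y₀)).2 := hstep n
          _ ≤ α + (1 - μ) * (α / μ + (1 - μ) ^ n * (y₀ - α / μ)) := by
              have := mul_le_mul_of_nonneg_left ih'.le hμ'
              linarith
          _ = α / μ + (1 - μ) ^ (n+1) * (y₀ - α / μ) := by
              rw [pow_succ]; linear_combination hαμ
  refine ⟨key, ?_⟩
  -- limsup part
  set v : ℕ → ℝ := fun n => α / μ + (1 - μ) ^ n * |y₀ - α / μ| with hv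
  have hvtend : Tendsto v atTop (nhds (α / μ)) := by
    have h1 : Tendsto (fun n : ℕ => (1 - μ) ^ n) atTop (nhds 0) := by
      apply tendsto_pow_atTop_nhds_zero_of_lt_one hμ'
      linarith
    have := ((h1.mul_const |y₀ - α / μ|).const_add (α / μ))
    simpa using this
  have huv : ∀ᶠ n : ℕ in atTop, (W^[n] (x₀, y₀)).2 ≤ v n := by
    filter_upwards [eventually_ge_atTop 1] with n hn
    have h1 := key n hn
    have h2 : (1 - μ) ^ n * (y₀ - α / μ) ≤ (1 - μ) ^ n * |y₀ - α / μ| :=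
      mul_le_mul_of_nonneg_left (le_abs_self _) (pow_nonneg hμ' n)
    simp only [hv]
    linarith
  have hbd : IsBoundedUnder (· ≤ ·) atTop v := hvtend.isBoundedUnder_le
  have hcb : IsCoboundedUnder (· ≤ ·) atTop (fun n : ℕ => (W^[n] (x₀, y₀)).2) := by
    exact isCoboundedUnder_le_of_le atTop (fun n => (hquad n).2)
  calc limsup (fun n : ℕ => (W^[n] (x₀, y₀)).2) atTop ≤ limsup v atTop :=
        limsup_le_limsup huv hcb hbd
    _ = α / μ := hvtend.limsup_eq
end

section
/- If (x₀, y₀) ∈ [0,ω₁]×[0,ω₂] with x₀ ≤ ω₁ where ω₁ = α²β/(μd₀(α+γμ)) and ω₂ = α/μ, then the first coordinate of W(x₀,y₀) is at most ω₁, under conditions α>0, β>0, γ>0, 0<μ≤1, d₀>0, α+d₀≤1. -/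
/-- If `(x₀, y₀) ∈ [0,ω₁] × [0,ω₂]` then the first coordinate of `W (x₀, y₀)`
is at most `ω₁`. -/
theorem stmt_15 (α β γ μ d₀ : ℝ)
    (hα : 0 < α) (hβ : 0 < β) (hγ : 0 < γ) (hμ0 : 0 < μ) (hμ1 : μ ≤ 1)
    (hd₀ : 0 < d₀) (hαd : α + d₀ ≤ 1)
    (ω₁ ω₂ : ℝ)
    (hω₁ : ω₁ = α ^ 2 * β / (μ * d₀ * (α + γ * μ)))
    (hω₂ : ω₂ = α / μ)
    (x₀ y₀ : ℝ) (hx₀ : x₀ ∈ Set.Icc 0 ω₁) (hy₀ : y₀ ∈ Set.Icc 0 ω₂) :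
    β * y₀ ^ 2 / (γ + y₀) + (1 - d₀ - α / (1 + x₀)) * x₀ ≤ ω₁ := by
  obtain ⟨hx0, hx1⟩ := hx₀
  obtain ⟨hy0, hy1⟩ := hy₀
  have hgy : 0 < γ + y₀ := by linarith
  have h1x : 0 < 1 + x₀ := by linarith
  have hμy : μ * y₀ ≤ α := by
    rw [hω₂] at hy1
    calc μ * y₀ ≤ μ * (α / μ) := by nlinarith
    _ = α := by field_simp
  have hden : 0 < μ * d₀ * (α + γ * μ) := by positivity
  have hkey : d₀ * ω₁ = α ^ 2 * β / (μ * (α + γ * μ)) := by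
    rw [hω₁]; field_simp
  have hden2 : 0 < μ * (α + γ * μ) := by positivity
  have h1 : β * y₀ ^ 2 / (γ + y₀) ≤ d₀ * ω₁ := by
    rw [hkey, div_le_div_iff₀ hgy hden2]
    have hs : 0 ≤ α - μ * y₀ := by linarith
    have hsum : 0 ≤ α + μ * y₀ := by positivity
    nlinarith [mul_nonneg hβ.le (mul_nonneg (mul_nonneg hα.le hy0) hs),
      mul_nonneg hβ.le (mul_nonneg hγ.le (mul_nonneg hs hsum))]
  have h2 : (1 - d₀ - α / (1 + x₀)) * x₀ ≤ (1 - d₀) * ω₁ := by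
    have hfrac : 0 ≤ α / (1 + x₀) := by positivity
    have : (1 - d₀ - α / (1 + x₀)) * x₀ ≤ (1 - d₀) * x₀ := by nlinarith
    have : (1 - d₀) * x₀ ≤ (1 - d₀) * ω₁ := by nlinarith
    linarith
  linarith
end

section
/- Let (x*, y*) be a fixed point of W with x* > 0, y* > 0 (so y* = αx*/(μ(1+x*)) and d₀x* + αx*/(1+x*) = βy*²/(γ+y*)). Then the set Ω₁ = {(x,y): 0 ≤ x ≤ x*, 0 ≤ y ≤ y*} is invariant under W: for (x,y) ∈ Ω₁, W(x,y) ∈ Ω₁. -/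
/-- If `(x*, y*)` is a positive fixed point of `W`, then the rectangle
`Ω₁ = [0,x*] × [0,y*]` is invariant under `W`. -/
theorem stmt_16 (α β γ μ d₀ : ℝ)
    (hα : 0 < α) (hβ : 0 < β) (hγ : 0 < γ) (hμ0 : 0 < μ) (hμ1 : μ ≤ 1)
    (hd₀ : 0 < d₀) (hαd : α + d₀ ≤ 1)
    (xs ys : ℝ) (hxs : 0 < xs) (hys : 0 < ys)
    (hfix1 : β * ys ^ 2 / (γ + ys) + (1 - d₀ - α / (1 + xs)) * xs = xs)
    (hfix2 : α * xs / (1 + xs) + (1 - μ) * ys = ys)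
    (W : ℝ × ℝ → ℝ × ℝ)
    (hW : ∀ x y : ℝ, W (x, y) =
      (β * y ^ 2 / (γ + y) + (1 - d₀ - α / (1 + x)) * x,
       α * x / (1 + x) + (1 - μ) * y)) :
    Set.MapsTo W (Set.Icc 0 xs ×ˢ Set.Icc 0 ys) (Set.Icc 0 xs ×ˢ Set.Icc 0 ys) := by
  rintro ⟨x, y⟩ ⟨⟨hx0, hxx⟩, ⟨hy0, hyy⟩⟩
  dsimp only at hx0 hxx hy0 hyy
  rw [Set.mem_prod, hW]
  have h1x : (0:ℝ) < 1 + x := by linarith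
  have h1xs : (0:ℝ) < 1 + xs := by linarith
  have hγy : (0:ℝ) < γ + y := by linarith
  have hγys : (0:ℝ) < γ + ys := by linarith
  have e : ∀ z : ℝ, 0 < 1 + z →
      (1 - d₀ - α / (1 + z)) * z = ((1 - d₀) * (1 + z) - α) * z / (1 + z) := by
    intro z hz
    field_simp
  have hx2 : (1 - d₀ - α / (1 + x)) * x ≤ (1 - d₀ - α / (1 + xs)) * xs := by
    rw [e x h1x, e xs h1xs, div_le_div_iff₀ h1x h1xs]
    nlinarith [mul_nonneg (sub_nonneg.2 hxx) hx0, mul_nonneg (sub_nonneg.2 hxx) hxs.le,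
      mul_nonneg (mul_nonneg (sub_nonneg.2 hxx) hx0) hxs.le, sub_nonneg.2 hxx]
  have hy2 : β * y ^ 2 / (γ + y) ≤ β * ys ^ 2 / (γ + ys) := by
    rw [div_le_div_iff₀ hγy hγys]
    have key : y ^ 2 * (γ + ys) ≤ ys ^ 2 * (γ + y) := by
      nlinarith [mul_nonneg (mul_nonneg (sub_nonneg.2 hyy) hy0) hys.le,
        mul_nonneg (sub_nonneg.2 hyy) hy0, mul_nonneg (sub_nonneg.2 hyy) hys.le]
    nlinarith [mul_le_mul_of_nonneg_left key hβ.le]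
  have hdiv : α / (1 + x) ≤ α := by
    rw [div_le_iff₀ h1x]; nlinarith
  constructor
  · constructor
    · have h₁ : 0 ≤ β * y ^ 2 / (γ + y) := by positivity
      have h₂ : 0 ≤ (1 - d₀ - α / (1 + x)) * x :=
        mul_nonneg (by linarith) hx0
      linarith
    · linarith
  · constructor
    · have h₁ : 0 ≤ α * x / (1 + x) := by positivity
      nlinarith
    · have hx3 : α * x / (1 + x) ≤ α * xs / (1 + xs) := by
        rw [div_le_div_iff₀ h1x h1xs]
        nlinarith
      have h₂ : (1 - μ) * y ≤ (1 - μ) * ys :=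
        mul_le_mul_of_nonneg_left hyy (by linarith)
      linarith
end

section
/- Let (x*, y*) be a fixed point of W with x* > 0, y* > 0, and let ω₁ = α²β/(μd₀(α+γμ)), ω₂ = α/μ, assuming x* ≤ ω₁ and y* ≤ ω₂. Then the rectangle Ω₂ = {(x,y): x* ≤ x ≤ ω₁, y* ≤ y ≤ ω₂} is invariant under W. -/
set_option maxHeartbeats 1000000 in
/-- If `(x*, y*)` is a positive fixed point of `W` with `x* ≤ ω₁` and
`y* ≤ ω₂`, then the rectangle `Ω₂ = [x*,ω₁] × [y*,ω₂]` is invariant under `W`. -/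
theorem stmt_17 (α β γ μ d₀ : ℝ)
    (hα : 0 < α) (hβ : 0 < β) (hγ : 0 < γ) (hμ0 : 0 < μ) (hμ1 : μ ≤ 1)
    (hd₀ : 0 < d₀) (hαd : α + d₀ ≤ 1)
    (ω₁ ω₂ : ℝ)
    (hω₁ : ω₁ = α ^ 2 * β / (μ * d₀ * (α + γ * μ)))
    (hω₂ : ω₂ = α / μ)
    (xs ys : ℝ) (hxs : 0 < xs) (hys : 0 < ys)
    (hxsω : xs ≤ ω₁) (hysω : ys ≤ ω₂)
    (hfix1 : β * ys ^ 2 / (γ + ys) + (1 - d₀ - α / (1 + xs)) * xs = xs)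
    (hfix2 : α * xs / (1 + xs) + (1 - μ) * ys = ys)
    (W : ℝ × ℝ → ℝ × ℝ)
    (hW : ∀ x y : ℝ, W (x, y) =
      (β * y ^ 2 / (γ + y) + (1 - d₀ - α / (1 + x)) * x,
       α * x / (1 + x) + (1 - μ) * y)) :
    Set.MapsTo W (Set.Icc xs ω₁ ×ˢ Set.Icc ys ω₂) (Set.Icc xs ω₁ ×ˢ Set.Icc ys ω₂) := by
  rintro ⟨x, y⟩ hp
  simp only [Set.prodMk_mem_set_prod_eq, Set.mem_Icc] at hp
  obtain ⟨⟨hx1, hx2⟩, hy1, hy2⟩ := hp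
  have hx0 : 0 < x := lt_of_lt_of_le hxs hx1
  have hy0 : 0 < y := lt_of_lt_of_le hys hy1
  have h1x : (0:ℝ) < 1 + x := by linarith
  have h1xs : (0:ℝ) < 1 + xs := by linarith
  have hγy : (0:ℝ) < γ + y := by linarith
  have hγys : (0:ℝ) < γ + ys := by linarith
  have hω₂pos : 0 < ω₂ := lt_of_lt_of_le hys hysω
  have hω₁pos : 0 < ω₁ := lt_of_lt_of_le hxs hxsω
  have hγω₂ : (0:ℝ) < γ + ω₂ := by linarith
  have hαγμ : (0:ℝ) < α + γ * μ := by positivity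
  -- key algebraic identities
  have hcap : β * ω₂ ^ 2 / (γ + ω₂) = d₀ * ω₁ := by
    subst hω₁ hω₂
    rw [div_eq_iff (ne_of_gt hγω₂)]
    field_simp
    ring
  have hcap2 : α + (1 - μ) * ω₂ = ω₂ := by
    subst hω₂; field_simp; ring
  have hdiff : α * x / (1 + x) - α * xs / (1 + xs) = α * (x - xs) / ((1 + x) * (1 + xs)) := by
    field_simp
    ring
  -- monotonicity in x for the x-update
  have hxmono : (1 - d₀) * xs - α * xs / (1 + xs) ≤ (1 - d₀) * x - α * x / (1 + x) := by
    have h1 : α * (x - xs) / ((1 + x) * (1 + xs)) ≤ α * (x - xs) :=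
      div_le_self (by nlinarith) (by nlinarith)
    have h2 : α * (x - xs) ≤ (1 - d₀) * (x - xs) :=
      mul_le_mul_of_nonneg_right (by linarith) (by linarith)
    linarith [hdiff]
  -- x-update increasing in y
  have hymono : β * ys ^ 2 / (γ + ys) ≤ β * y ^ 2 / (γ + y) := by
    rw [div_le_div_iff₀ hγys hγy]
    have h : 0 ≤ β * (y - ys) * (γ * (y + ys) + y * ys) := by
      apply mul_nonneg (mul_nonneg hβ.le (by linarith)); nlinarith
    have e : β * y ^ 2 * (γ + ys) - β * ys ^ 2 * (γ + y)
        = β * (y - ys) * (γ * (y + ys) + y * ys) := by ring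
    linarith
  have hymono2 : β * y ^ 2 / (γ + y) ≤ β * ω₂ ^ 2 / (γ + ω₂) := by
    rw [div_le_div_iff₀ hγy hγω₂]
    have h : 0 ≤ β * (ω₂ - y) * (γ * (ω₂ + y) + ω₂ * y) := by
      apply mul_nonneg (mul_nonneg hβ.le (by linarith)); nlinarith
    have e : β * ω₂ ^ 2 * (γ + y) - β * y ^ 2 * (γ + ω₂)
        = β * (ω₂ - y) * (γ * (ω₂ + y) + ω₂ * y) := by ring
    linarith
  have hexp : (1 - d₀ - α / (1 + x)) * x = (1 - d₀) * x - α * x / (1 + x) := by ring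
  have hexps : (1 - d₀ - α / (1 + xs)) * xs = (1 - d₀) * xs - α * xs / (1 + xs) := by ring
  have hfracpos : 0 ≤ α * x / (1 + x) := by positivity
  have hfrac_le : α * x / (1 + x) ≤ α := by
    rw [div_le_iff₀ h1x]; nlinarith
  have hfrac_mono : α * xs / (1 + xs) ≤ α * x / (1 + x) := by
    have : 0 ≤ α * (x - xs) / ((1 + x) * (1 + xs)) := by
      apply div_nonneg (by nlinarith) (by positivity)
    linarith [hdiff]
  rw [hW x y]
  simp only [Set.prodMk_mem_set_prod_eq, Set.mem_Icc]
  constructor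
  · constructor
    · rw [hexp]
      rw [hexps] at hfix1
      linarith
    · rw [hexp]
      have : (1 - d₀) * x ≤ (1 - d₀) * ω₁ :=
        mul_le_mul_of_nonneg_left hx2 (by linarith)
      linarith [hcap]
  · constructor
    · have : (1 - μ) * ys ≤ (1 - μ) * y :=
        mul_le_mul_of_nonneg_left hy1 (by linarith)
      linarith [hfix2]
    · have : (1 - μ) * y ≤ (1 - μ) * ω₂ :=
        mul_le_mul_of_nonneg_left hy2 (by linarith)
      linarith [hcap2]
end

section
/- Let f₁: [a,b]×[c,d] → [a,b] and f₂: [a,b]×[c,d] → [c,d] be continuous functions that are nondecreasing in each variable, and suppose that whenever a₁∈[a,b], c₁∈[c,d], b₁∈[a,b], d₁∈[c,d] satisfy a₁=f₁(a₁,c₁), c₁=f₂(a₁,c₁), b₁=f₁(b₁,d₁), d₁=f₂(b₁,d₁), one has a₁=b₁ and c₁=d₁. Then the map W(x,y)=(f₁(x,y),f₂(x,y)) has exactly one fixed point (x*,y*) in [a,b]×[c,d], and for every initial point (x₀,y₀)∈[a,b]×[c,d] the sequence of iterates Wⁿ(x₀,y₀) converges to (x*,y*). -/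
open Filter Topology

/-- A cooperative map on a rectangle whose "boundary system" has only diagonal
solutions has a unique fixed point attracting every trajectory. -/
theorem stmt_18 (a b c d : ℝ) (hab : a ≤ b) (hcd : c ≤ d)
    (f₁ f₂ : ℝ → ℝ → ℝ)
    (hmap₁ : ∀ x ∈ Set.Icc a b, ∀ y ∈ Set.Icc c d, f₁ x y ∈ Set.Icc a b)
    (hmap₂ : ∀ x ∈ Set.Icc a b, ∀ y ∈ Set.Icc c d, f₂ x y ∈ Set.Icc c d)
    (hcont : ContinuousOn (fun p : ℝ × ℝ => (f₁ p.1 p.2, f₂ p.1 p.2))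
      (Set.Icc a b ×ˢ Set.Icc c d))
    (hmono₁ : ∀ x₁ ∈ Set.Icc a b, ∀ x₂ ∈ Set.Icc a b,
      ∀ y₁ ∈ Set.Icc c d, ∀ y₂ ∈ Set.Icc c d,
      x₁ ≤ x₂ → y₁ ≤ y₂ → f₁ x₁ y₁ ≤ f₁ x₂ y₂)
    (hmono₂ : ∀ x₁ ∈ Set.Icc a b, ∀ x₂ ∈ Set.Icc a b,
      ∀ y₁ ∈ Set.Icc c d, ∀ y₂ ∈ Set.Icc c d,
      x₁ ≤ x₂ → y₁ ≤ y₂ → f₂ x₁ y₁ ≤ f₂ x₂ y₂)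
    (hsol : ∀ a₁ ∈ Set.Icc a b, ∀ b₁ ∈ Set.Icc a b,
      ∀ c₁ ∈ Set.Icc c d, ∀ d₁ ∈ Set.Icc c d,
      a₁ = f₁ a₁ c₁ → c₁ = f₂ a₁ c₁ → b₁ = f₁ b₁ d₁ → d₁ = f₂ b₁ d₁ →
      a₁ = b₁ ∧ c₁ = d₁) :
    ∃ p : ℝ × ℝ, p ∈ Set.Icc a b ×ˢ Set.Icc c d ∧
      (f₁ p.1 p.2, f₂ p.1 p.2) = p ∧
      (∀ q : ℝ × ℝ, q ∈ Set.Icc a b ×ˢ Set.Icc c d →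
        (f₁ q.1 q.2, f₂ q.1 q.2) = q → q = p) ∧
      (∀ p₀ : ℝ × ℝ, p₀ ∈ Set.Icc a b ×ˢ Set.Icc c d →
        Tendsto (fun n : ℕ => (fun q : ℝ × ℝ => (f₁ q.1 q.2, f₂ q.1 q.2))^[n] p₀)
          atTop (𝓝 p)) := by
  classical
  set K := Set.Icc a b ×ˢ Set.Icc c d with hKdef
  set W : ℝ × ℝ → ℝ × ℝ := fun q => (f₁ q.1 q.2, f₂ q.1 q.2) with hWdef
  have hmapK : ∀ q ∈ K, W q ∈ K := by
    rintro ⟨x, y⟩ ⟨hx, hy⟩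
    exact ⟨hmap₁ x hx y hy, hmap₂ x hx y hy⟩
  have hmonoW : ∀ q ∈ K, ∀ r ∈ K, q ≤ r → W q ≤ W r := by
    rintro ⟨x₁, y₁⟩ ⟨hx₁, hy₁⟩ ⟨x₂, y₂⟩ ⟨hx₂, hy₂⟩ ⟨h1, h2⟩
    exact ⟨hmono₁ x₁ hx₁ x₂ hx₂ y₁ hy₁ y₂ hy₂ h1 h2,
           hmono₂ x₁ hx₁ x₂ hx₂ y₁ hy₁ y₂ hy₂ h1 h2⟩
  have hiterK : ∀ q ∈ K, ∀ n, W^[n] q ∈ K := by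
    intro q hq n
    induction n with
    | zero => simpa
    | succ n ih => rw [Function.iterate_succ_apply']; exact hmapK _ ih
  have hKclosed : IsClosed K := isClosed_Icc.prod isClosed_Icc
  set u : ℕ → ℝ × ℝ := fun n => W^[n] (a, c) with hudef
  set v : ℕ → ℝ × ℝ := fun n => W^[n] (b, d) with hvdef
  have hacK : (a, c) ∈ K := ⟨⟨le_refl a, hab⟩, ⟨le_refl c, hcd⟩⟩
  have hbdK : (b, d) ∈ K := ⟨⟨hab, le_refl b⟩, ⟨hcd, le_refl d⟩⟩
  have huK : ∀ n, u n ∈ K := fun n => hiterK _ hacK n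
  have hvK : ∀ n, v n ∈ K := fun n => hiterK _ hbdK n
  have husucc : ∀ n, u (n + 1) = W (u n) := fun n => Function.iterate_succ_apply' W n _
  have hvsucc : ∀ n, v (n + 1) = W (v n) := fun n => Function.iterate_succ_apply' W n _
  have humono : Monotone u := by
    apply monotone_nat_of_le_succ
    intro n
    induction n with
    | zero =>
      have h := hmapK _ hacK
      have h0 : u 0 = (a, c) := rfl
      rw [h0, husucc 0, h0]
      exact ⟨h.1.1, h.2.1⟩
    | succ n ih =>
      have h := hmonoW _ (huK n) _ (huK (n+1)) ih
      rw [← husucc n, ← husucc (n+1)] at h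
      exact h
  have hvanti : Antitone v := by
    apply antitone_nat_of_succ_le
    intro n
    induction n with
    | zero =>
      have h := hmapK _ hbdK
      have h0 : v 0 = (b, d) := rfl
      rw [hvsucc 0, h0]
      exact ⟨h.1.2, h.2.2⟩
    | succ n ih =>
      have h := hmonoW _ (hvK (n+1)) _ (hvK n) ih
      rw [← hvsucc (n+1), ← hvsucc n] at h
      exact h
  -- limits of u and v
  have hlim : ∀ w : ℕ → ℝ × ℝ, (∀ n, w n ∈ K) → (∀ n, w (n+1) = W (w n)) →
      (Monotone w ∨ Antitone w) →
      ∃ p ∈ K, W p = p ∧ Tendsto w atTop (𝓝 p) := by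
    intro w hwK hwsucc hmono
    have h1 : ∃ α, Tendsto (fun n => (w n).1) atTop (𝓝 α) := by
      rcases hmono with hm | hm
      · exact ⟨_, tendsto_atTop_ciSup (fun i j h => (hm h).1)
          ⟨b, by rintro x ⟨n, rfl⟩; exact (hwK n).1.2⟩⟩
      · exact ⟨_, tendsto_atTop_ciInf (fun i j h => (hm h).1)
          ⟨a, by rintro x ⟨n, rfl⟩; exact (hwK n).1.1⟩⟩
    have h2 : ∃ γ, Tendsto (fun n => (w n).2) atTop (𝓝 γ) := by
      rcases hmono with hm | hm
      · exact ⟨_, tendsto_atTop_ciSup (fun i j h => (hm h).2)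
          ⟨d, by rintro x ⟨n, rfl⟩; exact (hwK n).2.2⟩⟩
      · exact ⟨_, tendsto_atTop_ciInf (fun i j h => (hm h).2)
          ⟨c, by rintro x ⟨n, rfl⟩; exact (hwK n).2.1⟩⟩
    obtain ⟨α, hα⟩ := h1
    obtain ⟨γ, hγ⟩ := h2
    have hwt : Tendsto w atTop (𝓝 (α, γ)) := by
      have := hα.prodMk_nhds hγ
      simpa using this
    have hpK : (α, γ) ∈ K :=
      hKclosed.mem_of_tendsto hwt (Eventually.of_forall hwK)
    refine ⟨(α, γ), hpK, ?_, hwt⟩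
    have hwin : Tendsto w atTop (𝓝[K] (α, γ)) :=
      tendsto_nhdsWithin_of_tendsto_nhds_of_eventually_within _ hwt
        (Eventually.of_forall hwK)
    have hWw : Tendsto (fun n => W (w n)) atTop (𝓝 (W (α, γ))) :=
      (hcont (α, γ) hpK).tendsto.comp hwin
    have hWw' : Tendsto (fun n => W (w n)) atTop (𝓝 (α, γ)) := by
      have : Tendsto (fun n => w (n + 1)) atTop (𝓝 (α, γ)) :=
        hwt.comp (tendsto_add_atTop_nat 1)
      simpa [hwsucc] using this
    exact tendsto_nhds_unique hWw hWw'
  obtain ⟨p, hpK, hpfix, hptend⟩ := hlim u huK husucc (Or.inl humono)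
  obtain ⟨q, hqK, hqfix, hqtend⟩ := hlim v hvK hvsucc (Or.inr hvanti)
  have hfix_eq : ∀ r ∈ K, ∀ s ∈ K, W r = r → W s = s → r = s := by
    rintro ⟨x₁, y₁⟩ ⟨hx₁, hy₁⟩ ⟨x₂, y₂⟩ ⟨hx₂, hy₂⟩ h1 h2
    have e1 : f₁ x₁ y₁ = x₁ := congrArg Prod.fst h1
    have e2 : f₂ x₁ y₁ = y₁ := congrArg Prod.snd h1
    have e3 : f₁ x₂ y₂ = x₂ := congrArg Prod.fst h2
    have e4 : f₂ x₂ y₂ = y₂ := congrArg Prod.snd h2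
    obtain ⟨h5, h6⟩ := hsol x₁ hx₁ x₂ hx₂ y₁ hy₁ y₂ hy₂ e1.symm e2.symm e3.symm e4.symm
    exact Prod.ext h5 h6
  have hpq : p = q := hfix_eq p hpK q hqK hpfix hqfix
  refine ⟨p, hpK, hpfix, ?_, ?_⟩
  · intro r hrK hrfix
    exact hfix_eq r hrK p hpK hrfix hpfix
  · intro p₀ hp₀
    have hsq : ∀ n, u n ≤ W^[n] p₀ ∧ W^[n] p₀ ≤ v n := by
      intro n
      induction n with
      | zero => exact ⟨⟨hp₀.1.1, hp₀.2.1⟩, ⟨hp₀.1.2, hp₀.2.2⟩⟩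
      | succ n ih =>
        rw [husucc, hvsucc, Function.iterate_succ_apply']
        exact ⟨hmonoW _ (huK n) _ (hiterK _ hp₀ n) ih.1,
               hmonoW _ (hiterK _ hp₀ n) _ (hvK n) ih.2⟩
    have hu1 : Tendsto (fun n => (u n).1) atTop (𝓝 p.1) := (continuous_fst.tendsto p).comp hptend
    have hu2 : Tendsto (fun n => (u n).2) atTop (𝓝 p.2) := (continuous_snd.tendsto p).comp hptend
    have hv1 : Tendsto (fun n => (v n).1) atTop (𝓝 p.1) := by
      rw [hpq]; exact (continuous_fst.tendsto q).comp hqtend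
    have hv2 : Tendsto (fun n => (v n).2) atTop (𝓝 p.2) := by
      rw [hpq]; exact (continuous_snd.tendsto q).comp hqtend
    have h1 : Tendsto (fun n => (W^[n] p₀).1) atTop (𝓝 p.1) :=
      tendsto_of_tendsto_of_tendsto_of_le_of_le hu1 hv1
        (fun n => (hsq n).1.1) (fun n => (hsq n).2.1)
    have h2 : Tendsto (fun n => (W^[n] p₀).2) atTop (𝓝 p.2) :=
      tendsto_of_tendsto_of_tendsto_of_le_of_le hu2 hv2
        (fun n => (hsq n).1.2) (fun n => (hsq n).2.2)
    have := h1.prodMk_nhds h2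
    simpa using this
end

section
/- Assume α>0, β>0, γ>0, 0<μ≤1, d₀>0, α+d₀≤1, and β < ν where ν = (μ/α²)(√(d₀γμ)+√((α+d₀)(α+γμ)))². Then for every initial point (x₀,y₀) ∈ [0,ω₁]×[0,ω₂] with ω₁ = α²β/(μd₀(α+γμ)), ω₂ = α/μ, the iterates Wⁿ(x₀,y₀) converge to (0,0) as n → ∞. -/
open Filter Topology

/-- Key polynomial inequality. -/
lemma stmt19_key (α γ μ d₀ : ℝ) (hα : 0 < α) (hγ : 0 < γ) (hμ0 : 0 < μ)
    (hd₀ : 0 < d₀) (y : ℝ) :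
    (Real.sqrt (d₀ * γ * μ) + Real.sqrt ((α + d₀) * (α + γ * μ))) ^ 2 * (y * (α - μ * y))
      ≤ α ^ 2 * ((γ + y) * (α + d₀ - μ * y)) := by
  set s := Real.sqrt (d₀ * γ * μ) with hs_def
  set t := Real.sqrt ((α + d₀) * (α + γ * μ)) with ht_def
  have hs : s ^ 2 = d₀ * γ * μ := Real.sq_sqrt (by positivity)
  have ht : t ^ 2 = (α + d₀) * (α + γ * μ) := Real.sq_sqrt (by positivity)
  have hs0 : 0 ≤ s := Real.sqrt_nonneg _
  have ht0 : 0 ≤ t := Real.sqrt_nonneg _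
  have hst : (s * t) ^ 2 = (d₀ * γ * μ) * ((α + d₀) * (α + γ * μ)) := by
    rw [mul_pow, hs, ht]
  set a := μ * ((s + t) ^ 2 - α ^ 2) with ha_def
  set b := α * (α * (α + d₀ - γ * μ) - (s + t) ^ 2) with hb_def
  set c := α ^ 2 * (γ * (α + d₀)) with hc_def
  have ha : 0 < a := by
    have h2 : α ^ 2 < t ^ 2 := by
      rw [ht]
      nlinarith [mul_pos hγ hμ0, mul_pos hd₀ hα, mul_pos hd₀ (mul_pos hγ hμ0)]
    nlinarith [sq_nonneg s, mul_nonneg hs0 ht0]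
  have hb' : b = -(2 * α * (γ * μ * (α + d₀) + s * t)) := by
    rw [hb_def]; linear_combination (-α) * hs + (-α) * ht
  have hb4ac : b ^ 2 = 4 * a * c := by
    rw [hb', ha_def, hc_def]
    linear_combination 4 * α ^ 2 * hst + (-4 * μ * γ * (α + d₀) * α ^ 2) * hs
      + (-4 * μ * γ * (α + d₀) * α ^ 2) * ht
  have hqq : 4 * a * (α ^ 2 * ((γ + y) * (α + d₀ - μ * y))
      - (s + t) ^ 2 * (y * (α - μ * y)))
      = (2 * a * y + b) ^ 2 + (4 * a * c - b ^ 2) := by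
    rw [ha_def, hb_def, hc_def]; ring
  nlinarith [sq_nonneg (2 * a * y + b), hqq, hb4ac, ha]

/-- Uniqueness of the fixed point. -/
lemma stmt19_unique (α β γ μ d₀ : ℝ)
    (hα : 0 < α) (hβ : 0 < β) (hγ : 0 < γ) (hμ0 : 0 < μ) (hμ1 : μ ≤ 1)
    (hd₀ : 0 < d₀)
    (hβν : β < μ / α ^ 2 *
      (Real.sqrt (d₀ * γ * μ) + Real.sqrt ((α + d₀) * (α + γ * μ))) ^ 2)
    (x y : ℝ) (hx : 0 ≤ x) (hy : 0 ≤ y)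
    (hfx : β * y ^ 2 / (γ + y) + (1 - d₀ - α / (1 + x)) * x = x)
    (hfy : α * x / (1 + x) + (1 - μ) * y = y) :
    x = 0 ∧ y = 0 := by
  have h1x : (0:ℝ) < 1 + x := by linarith
  have hgy : (0:ℝ) < γ + y := by linarith
  have hfy' : α * x / (1 + x) = μ * y := by linarith
  have hfy'' : α * x = μ * y * (1 + x) := (div_eq_iff (ne_of_gt h1x)).1 hfy'
  rcases eq_or_lt_of_le hy with hy0 | hy0
  · -- y = 0
    have hy0 : y = 0 := hy0.symm
    subst hy0
    have hax : α * x = 0 := by linear_combination hfy''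
    have hx0 : x = 0 := by
      rcases mul_eq_zero.1 hax with h | h
      · exact absurd h (ne_of_gt hα)
      · exact h
    exact ⟨hx0, rfl⟩
  · -- y > 0, derive contradiction
    exfalso
    have hx0 : 0 < x := by nlinarith [mul_pos (mul_pos hμ0 hy0) h1x]
    have hmuy : μ * y < α := by
      by_contra h
      push_neg at h
      nlinarith [mul_le_mul_of_nonneg_right h hx, mul_pos hμ0 hy0]
    have hfx' : β * y ^ 2 / (γ + y) = d₀ * x + μ * y := by
      have he : α / (1 + x) * x = α * x / (1 + x) := by ring
      rw [sub_mul, sub_mul, he, hfy'] at hfx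
      linarith
    have hfx'' : β * y ^ 2 = (d₀ * x + μ * y) * (γ + y) :=
      (div_eq_iff (ne_of_gt hgy)).1 hfx'
    have hxval : x * (α - μ * y) = μ * y := by linear_combination hfy''
    have hmain : β * y * (α - μ * y) = μ * ((γ + y) * (α + d₀ - μ * y)) := by
      have e3 : y * (β * y * (α - μ * y)) = y * (μ * ((γ + y) * (α + d₀ - μ * y))) := by
        linear_combination (α - μ * y) * hfx'' + (γ + y) * d₀ * hxval
      exact mul_left_cancel₀ (ne_of_gt hy0) e3
    have hkey := stmt19_key α γ μ d₀ hα hγ hμ0 hd₀ y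
    have hαn : (0:ℝ) < α ^ 2 := by positivity
    have hyam : 0 < y * (α - μ * y) := mul_pos hy0 (by linarith)
    have hβν' : β * α ^ 2 < μ *
        (Real.sqrt (d₀ * γ * μ) + Real.sqrt ((α + d₀) * (α + γ * μ))) ^ 2 := by
      rw [div_mul_eq_mul_div, lt_div_iff₀ hαn] at hβν
      linarith
    have h5 := mul_le_mul_of_nonneg_left hkey hμ0.le
    have h6 : μ * (α ^ 2 * ((γ + y) * (α + d₀ - μ * y)))
        = α ^ 2 * (β * y * (α - μ * y)) := by linear_combination (-(α ^ 2)) * hmain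
    have h7 := mul_lt_mul_of_pos_right hβν' hyam
    nlinarith [h5, h6, h7]

/-- Monotonicity of both components of `W` on the positive quadrant. -/
lemma stmt19_mono (α β γ μ d₀ : ℝ)
    (hα : 0 < α) (hβ : 0 < β) (hγ : 0 < γ) (hμ0 : 0 < μ) (hμ1 : μ ≤ 1)
    (hd₀ : 0 < d₀) (hαd : α + d₀ ≤ 1)
    {x x' y y' : ℝ} (hx0 : 0 ≤ x) (hxx : x ≤ x') (hy0 : 0 ≤ y) (hyy : y ≤ y') :
    β * y ^ 2 / (γ + y) + (1 - d₀ - α / (1 + x)) * x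
      ≤ β * y' ^ 2 / (γ + y') + (1 - d₀ - α / (1 + x')) * x' ∧
    α * x / (1 + x) + (1 - μ) * y ≤ α * x' / (1 + x') + (1 - μ) * y' := by
  have h1x : (0:ℝ) < 1 + x := by linarith
  have h1x' : (0:ℝ) < 1 + x' := by linarith
  have hgy : (0:ℝ) < γ + y := by linarith
  have hgy' : (0:ℝ) < γ + y' := by linarith
  constructor
  · have p1 : β * y ^ 2 / (γ + y) ≤ β * y' ^ 2 / (γ + y') := by
      rw [div_le_div_iff₀ hgy hgy']
      nlinarith [mul_nonneg (mul_nonneg hβ.le hγ.le)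
          (mul_nonneg (sub_nonneg.2 hyy) (by linarith : (0:ℝ) ≤ y + y')),
        mul_nonneg (mul_nonneg (mul_nonneg hβ.le hy0) (hy0.trans hyy)) (sub_nonneg.2 hyy)]
    have p2 : (1 - d₀ - α / (1 + x)) * x ≤ (1 - d₀ - α / (1 + x')) * x' := by
      have e : ∀ z : ℝ, 0 < 1 + z →
          (1 - d₀ - α / (1 + z)) * z = ((1 - d₀) * z * (1 + z) - α * z) / (1 + z) := by
        intro z hz
        field_simp
      rw [e x h1x, e x' h1x', div_le_div_iff₀ h1x h1x']
      have hf : α ≤ (1 - d₀) * ((1 + x) * (1 + x')) := by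
        nlinarith [mul_nonneg hx0 (hx0.trans hxx)]
      nlinarith [mul_nonneg (sub_nonneg.2 hxx) (sub_nonneg.2 hf)]
    linarith
  · have p3 : α * x / (1 + x) ≤ α * x' / (1 + x') := by
      rw [div_le_div_iff₀ h1x h1x']
      nlinarith [mul_nonneg hα.le (sub_nonneg.2 hxx)]
    have p4 : (1 - μ) * y ≤ (1 - μ) * y' :=
      mul_le_mul_of_nonneg_left hyy (by linarith)
    linarith

/-- `W` maps the box `[0,ω₁] × [0,ω₂]` into itself. -/
lemma stmt19_range (α β γ μ d₀ : ℝ)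
    (hα : 0 < α) (hβ : 0 < β) (hγ : 0 < γ) (hμ0 : 0 < μ) (hμ1 : μ ≤ 1)
    (hd₀ : 0 < d₀) (hαd : α + d₀ ≤ 1)
    (ω₁ ω₂ : ℝ)
    (hω₁ : ω₁ = α ^ 2 * β / (μ * d₀ * (α + γ * μ)))
    (hω₂ : ω₂ = α / μ)
    {x y : ℝ} (hx0 : 0 ≤ x) (hx1 : x ≤ ω₁) (hy0 : 0 ≤ y) (hy1 : y ≤ ω₂) :
    0 ≤ β * y ^ 2 / (γ + y) + (1 - d₀ - α / (1 + x)) * x ∧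
    β * y ^ 2 / (γ + y) + (1 - d₀ - α / (1 + x)) * x ≤ ω₁ ∧
    0 ≤ α * x / (1 + x) + (1 - μ) * y ∧
    α * x / (1 + x) + (1 - μ) * y ≤ ω₂ := by
  have h1x : (0:ℝ) < 1 + x := by linarith
  have hgy : (0:ℝ) < γ + y := by linarith
  have hω₁0 : 0 ≤ ω₁ := le_trans hx0 hx1
  have hω₂0 : 0 ≤ ω₂ := le_trans hy0 hy1
  have h1ω : (0:ℝ) < 1 + ω₁ := by linarith
  refine ⟨?_, ?_, ?_, ?_⟩
  · have hαx : α / (1 + x) ≤ α := by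
      rw [div_le_iff₀ h1x]; nlinarith
    have t1 : 0 ≤ β * y ^ 2 / (γ + y) := div_nonneg (by positivity) hgy.le
    have t2 : 0 ≤ (1 - d₀ - α / (1 + x)) * x := mul_nonneg (by linarith) hx0
    linarith
  · have hm := (stmt19_mono α β γ μ d₀ hα hβ hγ hμ0 hμ1 hd₀ hαd hx0 hx1 hy0 hy1).1
    have hβω : β * ω₂ ^ 2 / (γ + ω₂) = d₀ * ω₁ := by
      have hgω : γ + α / μ ≠ 0 := by positivity
      rw [hω₁, hω₂]
      rw [div_eq_iff (show γ + α / μ ≠ 0 from hgω)]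
      field_simp
      ring
    have ht : (1 - d₀ - α / (1 + ω₁)) * ω₁ ≤ (1 - d₀) * ω₁ := by
      have : 0 ≤ α / (1 + ω₁) * ω₁ := mul_nonneg (by positivity) hω₁0
      nlinarith
    have := hβω
    nlinarith [hm, hβω, ht, mul_nonneg hd₀.le hω₁0]
  · have t3 : 0 ≤ α * x / (1 + x) := div_nonneg (by positivity) h1x.le
    have t4 : 0 ≤ (1 - μ) * y := mul_nonneg (by linarith) hy0
    linarith
  · have hx1' : α * x / (1 + x) ≤ α := by
      rw [div_le_iff₀ h1x]; nlinarith
    have hμω : (1 - μ) * ω₂ = ω₂ - α := by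
      rw [hω₂]; field_simp
    have t5 : (1 - μ) * y ≤ (1 - μ) * ω₂ :=
      mul_le_mul_of_nonneg_left hy1 (by linarith)
    linarith

/-- If `β < ν`, every trajectory of `W` starting in `[0,ω₁] × [0,ω₂]`
converges to the origin. -/
theorem stmt_19 (α β γ μ d₀ : ℝ)
    (hα : 0 < α) (hβ : 0 < β) (hγ : 0 < γ) (hμ0 : 0 < μ) (hμ1 : μ ≤ 1)
    (hd₀ : 0 < d₀) (hαd : α + d₀ ≤ 1)
    (hβν : β < μ / α ^ 2 *
      (Real.sqrt (d₀ * γ * μ) + Real.sqrt ((α + d₀) * (α + γ * μ))) ^ 2)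
    (ω₁ ω₂ : ℝ)
    (hω₁ : ω₁ = α ^ 2 * β / (μ * d₀ * (α + γ * μ)))
    (hω₂ : ω₂ = α / μ)
    (W : ℝ × ℝ → ℝ × ℝ)
    (hW : ∀ x y : ℝ, W (x, y) =
      (β * y ^ 2 / (γ + y) + (1 - d₀ - α / (1 + x)) * x,
       α * x / (1 + x) + (1 - μ) * y))
    (x₀ y₀ : ℝ) (hx₀ : x₀ ∈ Set.Icc 0 ω₁) (hy₀ : y₀ ∈ Set.Icc 0 ω₂) :
    Tendsto (fun n : ℕ => W^[n] (x₀, y₀)) atTop (𝓝 (0, 0)) := by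
  obtain ⟨hx₀0, hx₀1⟩ := hx₀
  obtain ⟨hy₀0, hy₀1⟩ := hy₀
  have hω₁0 : 0 ≤ ω₁ := le_trans hx₀0 hx₀1
  have hω₂0 : 0 ≤ ω₂ := le_trans hy₀0 hy₀1
  -- W as an explicit map on pairs
  set F : ℝ × ℝ → ℝ × ℝ := fun q =>
      (β * q.2 ^ 2 / (γ + q.2) + (1 - d₀ - α / (1 + q.1)) * q.1,
       α * q.1 / (1 + q.1) + (1 - μ) * q.2) with hF
  have hW' : ∀ q : ℝ × ℝ, W q = F q := by
    intro q
    have := hW q.1 q.2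
    simpa [hF] using this
  set p : ℕ → ℝ × ℝ := fun n => W^[n] (ω₁, ω₂) with hp
  set z : ℕ → ℝ × ℝ := fun n => W^[n] (x₀, y₀) with hz
  have hpstep : ∀ n, p (n + 1) = F (p n) := by
    intro n
    show W^[n + 1] (ω₁, ω₂) = F (W^[n] (ω₁, ω₂))
    rw [Function.iterate_succ_apply', hW']
  have hzstep : ∀ n, z (n + 1) = F (z n) := by
    intro n
    show W^[n + 1] (x₀, y₀) = F (W^[n] (x₀, y₀))
    rw [Function.iterate_succ_apply', hW']
  have hp0 : p 0 = (ω₁, ω₂) := rfl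
  have hz0 : z 0 = (x₀, y₀) := rfl
  -- invariance of the box along p
  have hbox : ∀ n, (0 ≤ (p n).1 ∧ (p n).1 ≤ ω₁) ∧ (0 ≤ (p n).2 ∧ (p n).2 ≤ ω₂) := by
    intro n
    induction n with
    | zero => exact ⟨⟨hω₁0, le_refl _⟩, ⟨hω₂0, le_refl _⟩⟩
    | succ n ih =>
      obtain ⟨⟨h1, h2⟩, ⟨h3, h4⟩⟩ := ih
      have hr := stmt19_range α β γ μ d₀ hα hβ hγ hμ0 hμ1 hd₀ hαd ω₁ ω₂ hω₁ hω₂ h1 h2 h3 h4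
      rw [hpstep n]
      exact ⟨⟨hr.1, hr.2.1⟩, ⟨hr.2.2.1, hr.2.2.2⟩⟩
  -- p is componentwise antitone
  have hstep_le : ∀ n, (p (n + 1)).1 ≤ (p n).1 ∧ (p (n + 1)).2 ≤ (p n).2 := by
    intro n
    induction n with
    | zero =>
      obtain ⟨⟨h1, h2⟩, ⟨h3, h4⟩⟩ := hbox 1
      exact ⟨h2, h4⟩
    | succ n ih =>
      have h := stmt19_mono α β γ μ d₀ hα hβ hγ hμ0 hμ1 hd₀ hαd
        (x := (p (n + 1)).1) (x' := (p n).1) (y := (p (n + 1)).2) (y' := (p n).2)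
        (hbox (n + 1)).1.1 ih.1 (hbox (n + 1)).2.1 ih.2
      constructor
      · rw [hpstep (n + 1)]
        calc (F (p (n + 1))).1 ≤ (F (p n)).1 := h.1
          _ = (p (n + 1)).1 := by rw [hpstep n]
      · rw [hpstep (n + 1)]
        calc (F (p (n + 1))).2 ≤ (F (p n)).2 := h.2
          _ = (p (n + 1)).2 := by rw [hpstep n]
  have hXanti : Antitone (fun n => (p n).1) :=
    antitone_nat_of_succ_le fun n => (hstep_le n).1
  have hYanti : Antitone (fun n => (p n).2) :=
    antitone_nat_of_succ_le fun n => (hstep_le n).2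
  have hXbdd : BddBelow (Set.range fun n => (p n).1) :=
    ⟨0, by rintro _ ⟨n, rfl⟩; exact (hbox n).1.1⟩
  have hYbdd : BddBelow (Set.range fun n => (p n).2) :=
    ⟨0, by rintro _ ⟨n, rfl⟩; exact (hbox n).2.1⟩
  set L₁ : ℝ := ⨅ n, (p n).1 with hL₁
  set L₂ : ℝ := ⨅ n, (p n).2 with hL₂
  have hXL : Tendsto (fun n => (p n).1) atTop (𝓝 L₁) :=
    tendsto_atTop_ciInf hXanti hXbdd
  have hYL : Tendsto (fun n => (p n).2) atTop (𝓝 L₂) :=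
    tendsto_atTop_ciInf hYanti hYbdd
  have hL₁0 : 0 ≤ L₁ := le_ciInf fun n => (hbox n).1.1
  have hL₂0 : 0 ≤ L₂ := le_ciInf fun n => (hbox n).2.1
  have hpair : Tendsto p atTop (𝓝 (L₁, L₂)) := by
    have := hXL.prodMk_nhds hYL
    simpa using this
  -- the limit is a fixed point of F
  have h1L : (0:ℝ) < 1 + L₁ := by linarith
  have hgL : (0:ℝ) < γ + L₂ := by linarith
  have hcont : ContinuousAt F (L₁, L₂) := by
    apply ContinuousAt.prodMk
    · exact ((continuousAt_const.mul (continuousAt_snd.pow 2)).div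
        (continuousAt_const.add continuousAt_snd) (ne_of_gt hgL)).add
        ((continuousAt_const.sub (continuousAt_const.div
          (continuousAt_const.add continuousAt_fst) (ne_of_gt h1L))).mul continuousAt_fst)
    · exact ((continuousAt_const.mul continuousAt_fst).div
        (continuousAt_const.add continuousAt_fst) (ne_of_gt h1L)).add
        (continuousAt_const.mul continuousAt_snd)
  have hshift : Tendsto (fun n => p (n + 1)) atTop (𝓝 (L₁, L₂)) :=
    hpair.comp (tendsto_add_atTop_nat 1)
  have hshift2 : Tendsto (fun n => p (n + 1)) atTop (𝓝 (F (L₁, L₂))) := by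
    have : (fun n => p (n + 1)) = fun n => F (p n) := funext hpstep
    rw [this]
    exact hcont.tendsto.comp hpair
  have hFL : F (L₁, L₂) = (L₁, L₂) := tendsto_nhds_unique hshift2 hshift
  have hfx : β * L₂ ^ 2 / (γ + L₂) + (1 - d₀ - α / (1 + L₁)) * L₁ = L₁ :=
    congrArg Prod.fst hFL
  have hfy : α * L₁ / (1 + L₁) + (1 - μ) * L₂ = L₂ :=
    congrArg Prod.snd hFL
  have huniq := stmt19_unique α β γ μ d₀ hα hβ hγ hμ0 hμ1 hd₀ hβν L₁ L₂ hL₁0 hL₂0 hfx hfy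
  -- squeeze: z is trapped between 0 and p
  have hcmp : ∀ n, (0 ≤ (z n).1 ∧ (z n).1 ≤ (p n).1) ∧
      (0 ≤ (z n).2 ∧ (z n).2 ≤ (p n).2) := by
    intro n
    induction n with
    | zero => exact ⟨⟨hx₀0, hx₀1⟩, ⟨hy₀0, hy₀1⟩⟩
    | succ n ih =>
      obtain ⟨⟨h1, h2⟩, ⟨h3, h4⟩⟩ := ih
      obtain ⟨⟨hb1, hb2⟩, ⟨hb3, hb4⟩⟩ := hbox n
      have hr := stmt19_range α β γ μ d₀ hα hβ hγ hμ0 hμ1 hd₀ hαd ω₁ ω₂ hω₁ hω₂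
        h1 (le_trans h2 hb2) h3 (le_trans h4 hb4)
      have hm := stmt19_mono α β γ μ d₀ hα hβ hγ hμ0 hμ1 hd₀ hαd h1 h2 h3 h4
      rw [hzstep n, hpstep n]
      exact ⟨⟨hr.1, hm.1⟩, ⟨hr.2.2.1, hm.2⟩⟩
  have hX0 : Tendsto (fun n => (p n).1) atTop (𝓝 0) := by
    rw [← huniq.1]; exact hXL
  have hY0 : Tendsto (fun n => (p n).2) atTop (𝓝 0) := by
    rw [← huniq.2]; exact hYL
  have hz1 : Tendsto (fun n => (z n).1) atTop (𝓝 0) :=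
    tendsto_of_tendsto_of_tendsto_of_le_of_le tendsto_const_nhds hX0
      (fun n => (hcmp n).1.1) (fun n => (hcmp n).1.2)
  have hz2 : Tendsto (fun n => (z n).2) atTop (𝓝 0) :=
    tendsto_of_tendsto_of_tendsto_of_le_of_le tendsto_const_nhds hY0
      (fun n => (hcmp n).2.1) (fun n => (hcmp n).2.2)
  have : Tendsto (fun n => ((z n).1, (z n).2)) atTop (𝓝 (0, 0)) :=
    hz1.prodMk_nhds hz2
  simpa using this
end
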